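/- arXiv:1205.1870 — 7 statements merged into one kernel-verified Lean document; each statement's English description precedes it below -/
import Mathlib

section
/- Under hypotheses (i), (ii), (iii), the polytope P_A has exactly n−ℓ extreme points (equivalently, P_A is combinatorially equivalent to a simplex) if and only if there exist vectors μ_1,…,μ_ℓ ∈ ℝ^n and pairwise distinct indices j_1,…,j_ℓ ∈ {1,…,n} such that ker(A) = ⋂_{i=1}^ℓ {x ∈ ℝ^n : ⟨x, μ_i⟩ = 0}, and for each i = 1,…,ℓ: ⟨e_{j_i}, μ_i⟩ < 0, ⟨e_{j_k}, μ_i⟩ = 0 for all k ≠ i, and ⟨e_j, μ_i⟩ ≥ 0 for all j ≠ j_i. -/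
/-!
Write `K = ker A` and `P = K ∩ Δ`. If `P` has `n - ℓ` extreme points, then by Krein–Milman it is
their convex hull; since `P` contains a positive point it spans `K`, so these `n - ℓ` points are a
basis of `K` and `P` is a simplex. Each vertex then has a private coordinate, on which all other
vertices vanish: otherwise the vertex could be pushed slightly below the sum of the others, giving a
nonnegative point of `K` with a negative barycentric coordinate. On `K` the `ℓ` remaining
coordinates are linear combinations of the private ones with nonnegative coefficients, and these
relations are the `μ i`.

Conversely, under the sign conditions a point of `ker μ` is determined by its coordinates outside
`{J i}`, and it is nonnegative as soon as those are. So `ker μ ∩ Δ` is the simplex spanned by the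
normalised points having a single nonzero coordinate outside `{J i}`, and these `n - ℓ` points,
told apart by their zero patterns, are its extreme points.
-/
open Set Finset Module Filter Topology Matrix

variable {ι κ V : Type*}

lemma exists_pos_forall_mul_le [Finite ι] {a b : ι → ℝ} (hb : 0 ≤ b)
    (hab : ∀ j, 0 < a j → 0 < b j) : ∃ ε > 0, ∀ j, ε * a j ≤ b j := by
  have h : ∀ j, ∀ᶠ ε in 𝓝[>] (0 : ℝ), ε * a j ≤ b j := by
    intro j
    rcases lt_or_ge 0 (a j) with ha | ha
    · have : Tendsto (fun ε : ℝ => ε * a j) (𝓝[>] 0) (𝓝 0) := by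
        simpa using ((continuous_mul_const (a j)).tendsto 0).mono_left nhdsWithin_le_nhds
      exact (this.eventually (gt_mem_nhds (hab j ha))).mono fun _ => le_of_lt
    · filter_upwards [self_mem_nhdsWithin] with ε hε
      exact (mul_nonpos_of_nonneg_of_nonpos (le_of_lt hε) ha).trans (hb j)
  obtain ⟨ε, hε, hpos⟩ := ((eventually_all.2 h).and self_mem_nhdsWithin).exists
  exact ⟨ε, hpos, hε⟩

lemma inv_sum_smul_mem_stdSimplex [Fintype ι] {x : ι → ℝ} (hx : 0 ≤ x) (hs : ∑ j, x j ≠ 0) :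
    (∑ j, x j)⁻¹ • x ∈ stdSimplex ℝ ι :=
  ⟨fun j => mul_nonneg (inv_nonneg.2 (sum_nonneg fun j _ => hx j)) (hx j), by
    simp [← mul_sum, hs]⟩

lemma exists_coeffs_of_mem_convexHull_range {E : Type*} [AddCommGroup E] [Module ℝ E] [Fintype V]
    {v : V → E} {x : E} (hx : x ∈ convexHull ℝ (range v)) :
    ∃ t : V → ℝ, 0 ≤ t ∧ ∑ k, t k = 1 ∧ ∑ k, t k • v k = x := by
  classical
  suffices convexHull ℝ (range v) ⊆ {x | ∃ t : V → ℝ, 0 ≤ t ∧ ∑ k, t k = 1 ∧ ∑ k, t k • v k = x}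
    from this hx
  refine convexHull_min ?_ ?_
  · rintro _ ⟨k, rfl⟩
    exact ⟨Pi.single k 1, Pi.single_nonneg.2 zero_le_one, by simp, by
      simp [Pi.single_apply, ite_smul]⟩
  · rintro _ ⟨t, ht0, ht1, rfl⟩ _ ⟨t', ht0', ht1', rfl⟩ a b ha hb hab
    refine ⟨a • t + b • t', add_nonneg (smul_nonneg ha ht0) (smul_nonneg hb ht0'), ?_, ?_⟩
    · simp [sum_add_distrib, ← mul_sum, ht1, ht1', hab]
    · simp [add_smul, sum_add_distrib, smul_sum, mul_smul]

lemma convexHull_extremePoints_eq_of_finite {E : Type*} [AddCommGroup E] [Module ℝ E]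
    [TopologicalSpace E] [T2Space E] [IsTopologicalAddGroup E] [ContinuousSMul ℝ E]
    [LocallyConvexSpace ℝ E] {s : Set E} (hs : IsCompact s) (hconv : Convex ℝ s)
    (hfin : (s.extremePoints ℝ).Finite) : convexHull ℝ (s.extremePoints ℝ) = s := by
  simpa [(hfin.isClosed_convexHull ℝ).closure_eq] using closure_convexHull_extremePoints hs hconv

lemma mem_extremePoints_of_support_subset {P : Set (ι → ℝ)} {w : ι → ℝ}
    (hP : ∀ y ∈ P, 0 ≤ y) (hw : w ∈ P) (h : ∀ y ∈ P, (∀ j, w j = 0 → y j = 0) → y = w) :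
    w ∈ P.extremePoints ℝ := by
  refine mem_extremePoints.2 ⟨hw, fun x hx y hy ⟨a, b, ha, hb, _, hxy⟩ => ?_⟩
  have hzero : ∀ j, w j = 0 → x j = 0 ∧ y j = 0 := by
    intro j hj
    have h0 : a * x j + b * y j = 0 := by simpa [hj] using congrFun hxy j
    have hx0 : 0 ≤ x j := hP x hx j
    have hy0 : 0 ≤ y j := hP y hy j
    constructor <;> nlinarith
  exact ⟨h x hx fun j hj => (hzero j hj).1, h y hy fun j hj => (hzero j hj).2⟩

structure IsPrivateCoords (v : V → ι → ℝ) (σ : V → ι) : Prop where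
  pos : ∀ k, 0 < v k (σ k)
  eq_zero : ∀ k k', k' ≠ k → v k' (σ k) = 0

namespace IsPrivateCoords

variable {v : V → ι → ℝ} {σ : V → ι}

lemma injective (h : IsPrivateCoords v σ) : Function.Injective v := by
  intro k k' hkk'
  by_contra hne
  have := h.eq_zero k k' (Ne.symm hne)
  rw [← hkk'] at this
  exact (h.pos k).ne' this

lemma injective_coord (h : IsPrivateCoords v σ) : Function.Injective σ := by
  intro k k' hkk'
  by_contra hne
  have := h.eq_zero k k' (Ne.symm hne)
  rw [hkk'] at this
  exact (h.pos k').ne' this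

end IsPrivateCoords

theorem extremePoints_convexHull_eq_range [Fintype V] {v : V → ι → ℝ} {σ : V → ι}
    (hv : ∀ k, 0 ≤ v k) (hσ : IsPrivateCoords v σ) :
    (convexHull ℝ (range v)).extremePoints ℝ = range v := by
  refine extremePoints_convexHull_subset.antisymm ?_
  rintro _ ⟨k, rfl⟩
  refine mem_extremePoints_of_support_subset
    (fun y hy => convexHull_min (by rintro _ ⟨k', rfl⟩; exact hv k') (convex_Ici 0) hy)
    (subset_convexHull ℝ _ ⟨k, rfl⟩) fun y hy hsupp => ?_
  obtain ⟨t, -, ht1, rfl⟩ := exists_coeffs_of_mem_convexHull_range hy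
  have hσ_apply : ∀ k', (∑ k'', t k'' • v k'') (σ k') = t k' * v k' (σ k') := by
    intro k'
    rw [Finset.sum_apply, sum_eq_single k' (fun k'' _ hk'' => by
      simp [hσ.eq_zero k' k'' hk'']) (by simp)]
    rfl
  have ht : ∀ k' ≠ k, t k' = 0 := by
    intro k' hk'
    have := hsupp (σ k') (hσ.eq_zero k' k hk'.symm)
    rw [hσ_apply] at this
    exact (mul_eq_zero.1 this).resolve_right (hσ.pos k').ne'
  rw [sum_eq_single k (fun k' _ hk' => by rw [ht k' hk', zero_smul]) (by simp)]
  rw [sum_eq_single k (fun k' _ hk' => ht k' hk') (by simp)] at ht1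
  rw [ht1, one_smul]

section InterStdSimplex

variable [Fintype ι] [Fintype V] {K : Submodule ℝ (ι → ℝ)}

lemma mem_span_inter_stdSimplex_of_nonneg {x : ι → ℝ} (hxK : x ∈ K) (hx : 0 ≤ x) :
    x ∈ Submodule.span ℝ ((K : Set (ι → ℝ)) ∩ stdSimplex ℝ ι) := by
  by_cases hs : ∑ j, x j = 0
  · have : x = 0 := funext fun j =>
      (sum_eq_zero_iff_of_nonneg fun j _ => hx j).1 hs j (mem_univ j)
    exact this ▸ Submodule.zero_mem _
  · have := Submodule.smul_mem _ (∑ j, x j)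
      (Submodule.subset_span (mem_inter (K.smul_mem _ hxK) (inv_sum_smul_mem_stdSimplex hx hs)))
    rwa [smul_inv_smul₀ hs] at this

lemma span_inter_stdSimplex_eq {p : ι → ℝ} (hpK : p ∈ K) (hp : ∀ j, 0 < p j) :
    Submodule.span ℝ ((K : Set (ι → ℝ)) ∩ stdSimplex ℝ ι) = K := by
  refine le_antisymm (Submodule.span_le.2 inter_subset_left) fun z hz => ?_
  obtain ⟨ε, hε, hεz⟩ := exists_pos_forall_mul_le (a := -z) (fun j => (hp j).le) fun j _ => hp j
  have hpz := mem_span_inter_stdSimplex_of_nonneg (K.add_mem hpK (K.smul_mem ε hz)) fun j => by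
    have := hεz j
    simp only [Pi.neg_apply, mul_neg] at this
    simp only [Pi.zero_apply, Pi.add_apply, Pi.smul_apply, smul_eq_mul]
    linarith
  have := Submodule.smul_mem _ ε⁻¹
    (Submodule.sub_mem _ hpz (mem_span_inter_stdSimplex_of_nonneg hpK fun j => (hp j).le))
  rwa [add_sub_cancel_left, inv_smul_smul₀ hε.ne'] at this

lemma inter_stdSimplex_eq_convexHull {u : V → ι → ℝ} (hu : ∀ k, u k ∈ K) (hu0 : ∀ k, 0 ≤ u k)
    (hsum : ∀ k, ∑ j, u k j ≠ 0)
    (hcone : ∀ x ∈ K, 0 ≤ x → ∃ t : V → ℝ, 0 ≤ t ∧ ∑ k, t k • u k = x) :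
    (K : Set (ι → ℝ)) ∩ stdSimplex ℝ ι = convexHull ℝ (range fun k => (∑ j, u k j)⁻¹ • u k) := by
  refine subset_antisymm (fun x hx => ?_)
    (convexHull_min ?_ (K.convex.inter (convex_stdSimplex ℝ ι)))
  · obtain ⟨t, ht0, rfl⟩ := hcone x hx.1 hx.2.1
    refine mem_convexHull_of_exists_fintype (fun k => t k * ∑ j, u k j) _
      (fun k => mul_nonneg (ht0 k) (sum_nonneg fun j _ => hu0 k j)) ?_ (fun k => ⟨k, rfl⟩) ?_
    · have := hx.2.2
      simp only [Finset.sum_apply, Pi.smul_apply, smul_eq_mul] at this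
      rwa [sum_comm, sum_congr rfl fun k _ => (mul_sum _ _ _).symm] at this
    · simp [mul_smul, smul_inv_smul₀ (hsum _)]
  · rintro _ ⟨k, rfl⟩
    exact ⟨K.smul_mem _ (hu k), inv_sum_smul_mem_stdSimplex (hu0 k) (hsum k)⟩

variable {v : V → ι → ℝ}

lemma nonneg_of_sum_smul_mem (hv : LinearIndependent ℝ v)
    (hP : (K : Set (ι → ℝ)) ∩ stdSimplex ℝ ι = convexHull ℝ (range v)) {c : V → ℝ}
    (hK : ∑ k, c k • v k ∈ K) (h0 : 0 ≤ ∑ k, c k • v k) : 0 ≤ c := by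
  set x := ∑ k, c k • v k
  by_cases hs : ∑ j, x j = 0
  · have hx : x = 0 := funext fun j =>
      (sum_eq_zero_iff_of_nonneg fun j _ => h0 j).1 hs j (mem_univ j)
    intro k
    exact (Fintype.linearIndependent_iff.1 hv c hx k).ge
  · have hx : (∑ j, x j)⁻¹ • x ∈ convexHull ℝ (range v) :=
      hP ▸ mem_inter (K.smul_mem _ hK) (inv_sum_smul_mem_stdSimplex h0 hs)
    obtain ⟨t, ht0, -, ht⟩ := exists_coeffs_of_mem_convexHull_range hx
    have hct : c = (∑ j, x j) • t := by
      refine funext fun k => (sub_eq_zero.1 (Fintype.linearIndependent_iff.1 hv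
        ((∑ j, x j) • t - c) ?_ k)).symm
      simp only [Pi.sub_apply, Pi.smul_apply, smul_eq_mul, sub_smul, sum_sub_distrib, mul_smul,
        ← smul_sum, ht, smul_inv_smul₀ hs, x, sub_self]
    rw [hct]
    exact smul_nonneg (sum_nonneg fun j _ => h0 j) ht0

theorem exists_isPrivateCoords (hv : LinearIndependent ℝ v)
    (hP : (K : Set (ι → ℝ)) ∩ stdSimplex ℝ ι = convexHull ℝ (range v)) :
    ∃ σ, IsPrivateCoords v σ := by
  have hvP : ∀ k, v k ∈ (K : Set (ι → ℝ)) ∩ stdSimplex ℝ ι :=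
    fun k => hP ▸ subset_convexHull ℝ _ ⟨k, rfl⟩
  suffices ∀ k, ∃ j, 0 < v k j ∧ ∀ k' ≠ k, v k' j = 0 by
    choose σ hσ using this
    exact ⟨σ, fun k => (hσ k).1, fun k k' hk' => (hσ k).2 k' hk'⟩
  classical
  intro k
  by_contra! hcover
  set y := ∑ k' ∈ Finset.univ.erase k, v k'
  have hy0 : 0 ≤ y := sum_nonneg fun k' _ => (hvP k').2.1
  have hy : ∀ j, 0 < v k j → 0 < y j := by
    intro j hj
    obtain ⟨k', hk', hk'j⟩ := hcover j hj
    simp only [y, Finset.sum_apply]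
    exact lt_of_lt_of_le ((hvP k').2.1 j |>.lt_of_ne' hk'j)
      (single_le_sum (f := fun k'' => v k'' j) (fun k'' _ => (hvP k'').2.1 j)
        (mem_erase.2 ⟨hk', mem_univ k'⟩))
  obtain ⟨ε, hε, hεy⟩ := exists_pos_forall_mul_le hy0 hy
  set c : V → ℝ := fun k' => if k' = k then -ε else 1
  have hc : ∑ k', c k' • v k' = y - ε • v k := by
    rw [← add_sum_erase _ _ (mem_univ k), sum_congr rfl fun k' hk' => by
      rw [show c k' = 1 from if_neg (ne_of_mem_erase hk'), one_smul]]
    simp only [c, if_pos rfl, neg_smul]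
    abel
  have hcK : ∑ k', c k' • v k' ∈ K := hc ▸ K.sub_mem (K.sum_mem fun k' _ => (hvP k').1)
    (K.smul_mem ε (hvP k).1)
  have hc0 : 0 ≤ ∑ k', c k' • v k' := hc ▸ fun j => by
    simpa [sub_nonneg] using hεy j
  have := nonneg_of_sum_smul_mem hv hP hcK hc0 k
  simp only [c, if_pos rfl, Pi.zero_apply, Left.nonneg_neg_iff] at this
  linarith

end InterStdSimplex

structure IsSimplexPattern (μ : Matrix κ ι ℝ) (J : κ → ι) : Prop where
  injective : Function.Injective J
  neg : ∀ i, μ i (J i) < 0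
  eq_zero : ∀ i k, k ≠ i → μ i (J k) = 0
  nonneg : ∀ i j, j ≠ J i → 0 ≤ μ i j

lemma coe_ker_mulVecLin [Fintype ι] (M : Matrix κ ι ℝ) :
    (LinearMap.ker M.mulVecLin : Set (ι → ℝ)) = {x | ∀ i, ∑ j, M i j * x j = 0} := by
  ext x
  simp [funext_iff, mulVec, dotProduct]

section PrivateCoords

variable [Fintype ι] [DecidableEq ι] [Fintype V] {v : V → ι → ℝ} {σ : V → ι} {J : κ → ι}

/-- The `i`-th row expresses coordinate `J i` through the private coordinates, using
`x (J i) = ∑ k, x (σ k) * v k (J i) / v k (σ k)` on the span of the `v k`. -/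
noncomputable def privateCoordsMatrix (v : V → ι → ℝ) (σ : V → ι) (J : κ → ι) : Matrix κ ι ℝ :=
  fun i => -Pi.single (J i) 1 + ∑ k, (v k (J i) / v k (σ k)) • Pi.single (σ k) 1

lemma privateCoordsMatrix_dotProduct (i : κ) (x : ι → ℝ) :
    privateCoordsMatrix v σ J i ⬝ᵥ x = -x (J i) + ∑ k, v k (J i) / v k (σ k) * x (σ k) := by
  simp [privateCoordsMatrix, add_dotProduct, sum_dotProduct]

lemma privateCoordsMatrix_apply (i : κ) (j : ι) :
    privateCoordsMatrix v σ J i j =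
      -(if J i = j then 1 else 0) + ∑ k, if σ k = j then v k (J i) / v k (σ k) else 0 := by
  simpa [Pi.single_apply] using privateCoordsMatrix_dotProduct (v := v) (σ := σ) (J := J) i
    (Pi.single j 1)

lemma isSimplexPattern_privateCoordsMatrix (hv : ∀ k, 0 ≤ v k) (hσ : IsPrivateCoords v σ)
    (hJ : Function.Injective J) (hJσ : ∀ i k, σ k ≠ J i) :
    IsSimplexPattern (privateCoordsMatrix v σ J) J where
  injective := hJ
  neg i := by simp [privateCoordsMatrix_apply, hJσ i]
  eq_zero i k hk := by simp [privateCoordsMatrix_apply, (hJ.ne hk).symm, hJσ k]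
  nonneg i j hj := by
    rw [privateCoordsMatrix_apply, if_neg (Ne.symm hj), neg_zero, zero_add]
    exact sum_nonneg fun k _ => by
      split_ifs
      exacts [div_nonneg (hv k _) (hσ.pos k).le, le_rfl]

lemma span_range_eq_ker_privateCoordsMatrix (hσ : IsPrivateCoords v σ)
    (hσJ : ∀ j, j ∉ range σ → j ∈ range J) :
    Submodule.span ℝ (range v) = LinearMap.ker (privateCoordsMatrix v σ J).mulVecLin := by
  have hσ_apply : ∀ x : ι → ℝ, ∀ k, ∑ k', x (σ k') / v k' (σ k') * v k' (σ k) = x (σ k) := by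
    intro x k
    rw [sum_eq_single k (fun k' _ hk' => by rw [hσ.eq_zero k k' hk', mul_zero]) (by simp),
      div_mul_cancel₀ _ (hσ.pos k).ne']
  refine le_antisymm (Submodule.span_le.2 ?_) fun x hx => ?_
  · rintro _ ⟨k, rfl⟩
    simp only [SetLike.mem_coe, LinearMap.mem_ker, mulVecLin_apply, funext_iff, mulVec,
      Pi.zero_apply]
    intro i
    rw [privateCoordsMatrix_dotProduct, sum_eq_single k (fun k' _ hk' => by
      rw [hσ.eq_zero k' k hk'.symm, mul_zero]) (by simp), div_mul_cancel₀ _ (hσ.pos k).ne',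
      neg_add_cancel]
  · have hx : ∀ i, privateCoordsMatrix v σ J i ⬝ᵥ x = 0 := fun i => congrFun hx i
    have : ∑ k, (x (σ k) / v k (σ k)) • v k = x := by
      funext j
      simp only [Finset.sum_apply, Pi.smul_apply, smul_eq_mul]
      by_cases hj : j ∈ range σ
      · obtain ⟨k, rfl⟩ := hj
        exact hσ_apply x k
      · obtain ⟨i, rfl⟩ := hσJ j hj
        have := hx i
        rw [privateCoordsMatrix_dotProduct] at this
        rw [neg_add_eq_zero.1 this]
        exact sum_congr rfl fun k _ => by ring
    exact this ▸ Submodule.sum_mem _ fun k _ =>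
      Submodule.smul_mem _ _ (Submodule.subset_span ⟨k, rfl⟩)

end PrivateCoords

theorem exists_isSimplexPattern_of_ncard_extremePoints [Fintype ι] [DecidableEq ι] [Fintype κ]
    {K : Submodule ℝ (ι → ℝ)} {p : ι → ℝ} (hpP : p ∈ (K : Set (ι → ℝ)) ∩ stdSimplex ℝ ι)
    (hp : ∀ j, 0 < p j)
    (hE : (((K : Set (ι → ℝ)) ∩ stdSimplex ℝ ι).extremePoints ℝ).ncard = finrank ℝ K)
    (hκ : Fintype.card κ + finrank ℝ K = Fintype.card ι) :
    ∃ (μ : Matrix κ ι ℝ) (J : κ → ι), IsSimplexPattern μ J ∧ K = LinearMap.ker μ.mulVecLin := by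
  set P := (K : Set (ι → ℝ)) ∩ stdSimplex ℝ ι
  set E := P.extremePoints ℝ
  have hK : 0 < finrank ℝ K := finrank_pos_iff_exists_ne_zero.2 ⟨⟨p, hpP.1⟩, fun h => by
    simpa [show p = 0 from congrArg Subtype.val h] using hpP.2.2⟩
  have hEfin : E.Finite := finite_of_ncard_pos (hE ▸ hK)
  have hhull : convexHull ℝ E = P := convexHull_extremePoints_eq_of_finite
    ((isCompact_stdSimplex ℝ ι).inter_left K.closed_of_finiteDimensional)
    (K.convex.inter (convex_stdSimplex ℝ ι)) hEfin
  have hspan : Submodule.span ℝ E = K := by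
    refine le_antisymm (Submodule.span_le.2 fun x hx => (extremePoints_subset hx).1) ?_
    calc K = Submodule.span ℝ P := (span_inter_stdSimplex_eq hpP.1 hp).symm
      _ ≤ Submodule.span ℝ E := Submodule.span_le.2
        (hhull ▸ convexHull_min Submodule.subset_span (Submodule.span ℝ E).convex)
  let := hEfin.fintype
  have hEcard : Fintype.card E = finrank ℝ K := by
    rw [← hE, Set.ncard_eq_toFinset_card', Set.toFinset_card]
  have hli : LinearIndependent ℝ ((↑) : E → ι → ℝ) := by
    rw [linearIndependent_iff_card_eq_finrank_span, Set.finrank, Subtype.range_coe, hspan, hEcard]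
  obtain ⟨σ, hσ⟩ := exists_isPrivateCoords hli (by rw [Subtype.range_coe, hhull])
  have hcard : Fintype.card κ = Fintype.card {j // j ∉ range σ} := by
    rw [Fintype.card_subtype_compl, Set.card_range_of_injective hσ.injective_coord, hEcard]
    omega
  set e := Fintype.equivOfCardEq hcard
  refine ⟨privateCoordsMatrix (↑) σ (fun i => e i), fun i => e i,
    isSimplexPattern_privateCoordsMatrix (fun k => (extremePoints_subset k.2).2.1) hσ
      (Subtype.val_injective.comp e.injective) (fun i k h => (e i).2 ⟨k, h⟩), ?_⟩
  rw [← span_range_eq_ker_privateCoordsMatrix hσ (fun j hj => ⟨e.symm ⟨j, hj⟩, by simp⟩),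
    Subtype.range_coe, hspan]

lemma sum_comp_add_sum_notMem_range [Fintype ι] [DecidableEq ι] [Fintype κ] {J : κ → ι}
    (hJ : Function.Injective J) (f : ι → ℝ) :
    ∑ i, f (J i) + ∑ c : {j // j ∉ range J}, f c = ∑ j, f j := by
  rw [← Fintype.sum_subtype_add_sum_subtype (· ∈ range J) f,
    Fintype.sum_equiv (Equiv.ofInjective J hJ) (fun i => f (J i)) (fun j => f j) fun _ => rfl]
  convert rfl

section Pattern

variable [DecidableEq ι] [Fintype κ] {μ : Matrix κ ι ℝ} {J : κ → ι} {c : ι}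

/-- For `c ∉ range J`: the point of `ker μ` with coordinate `1` at `c` and `0` at the other
coordinates outside `range J`. -/
noncomputable def extremeRay (μ : Matrix κ ι ℝ) (J : κ → ι) (c : ι) : ι → ℝ :=
  Pi.single c 1 + ∑ i, (μ i c / -μ i (J i)) • Pi.single (J i) 1

lemma extremeRay_apply_of_notMem {c' : ι} (hc' : c' ∉ range J) :
    extremeRay μ J c c' = if c' = c then 1 else 0 := by
  simp [extremeRay, Pi.single_apply, fun i => Ne.symm (fun h : J i = c' => hc' ⟨i, h⟩)]

lemma extremeRay_apply_self (hJ : Function.Injective J) (hc : c ∉ range J) (k : κ) :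
    extremeRay μ J c (J k) = μ k c / -μ k (J k) := by
  have hkc : J k ≠ c := fun h => hc ⟨k, h⟩
  simp only [extremeRay, Pi.add_apply, Finset.sum_apply, Pi.smul_apply, Pi.single_apply, hkc,
    if_false, zero_add, smul_eq_mul, mul_ite, mul_one, mul_zero]
  rw [sum_eq_single k (fun i _ hi => if_neg (hJ.ne (Ne.symm hi))) (by simp), if_pos rfl]

lemma extremeRay_nonneg (h : IsSimplexPattern μ J) (hc : c ∉ range J) : 0 ≤ extremeRay μ J c := by
  intro j
  by_cases hj : j ∈ range J
  · obtain ⟨k, rfl⟩ := hj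
    rw [extremeRay_apply_self h.injective hc]
    exact div_nonneg (h.nonneg k c fun hck => hc ⟨k, hck.symm⟩) (neg_nonneg.2 (h.neg k).le)
  · rw [extremeRay_apply_of_notMem hj]
    split_ifs <;> norm_num

lemma extremeRay_mem_ker [Fintype ι] (h : IsSimplexPattern μ J) :
    extremeRay μ J c ∈ LinearMap.ker μ.mulVecLin := by
  ext k
  simp only [mulVecLin_apply, mulVec, extremeRay, dotProduct_add, dotProduct_sum, dotProduct_smul,
    dotProduct_single, mul_one, smul_eq_mul, Pi.zero_apply]
  rw [sum_eq_single k (fun i _ hi => by rw [h.eq_zero k i hi, mul_zero]) (by simp)]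
  have := (h.neg k).ne
  field_simp
  ring

lemma sum_smul_extremeRay [Fintype ι] (h : IsSimplexPattern μ J) {x : ι → ℝ}
    (hx : x ∈ LinearMap.ker μ.mulVecLin) :
    ∑ c : {j // j ∉ range J}, x c • extremeRay μ J c = x := by
  funext j
  simp only [Finset.sum_apply, Pi.smul_apply, smul_eq_mul]
  by_cases hj : j ∈ range J
  · obtain ⟨k, rfl⟩ := hj
    have hk : ∑ j, μ k j * x j = 0 := congrFun hx k
    rw [← sum_comp_add_sum_notMem_range h.injective, sum_eq_single k
      (fun i _ hi => by rw [h.eq_zero k i hi, zero_mul]) (by simp)] at hk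
    rw [sum_congr rfl fun (c : {j // j ∉ range J}) _ => by
      rw [extremeRay_apply_self h.injective c.2]]
    simp only [mul_div_assoc', ← sum_div]
    rw [div_eq_iff (neg_ne_zero.2 (h.neg k).ne)]
    simp_rw [mul_comm (x _) (μ k _)]
    linear_combination hk
  · simp only [extremeRay_apply_of_notMem hj]
    rw [sum_eq_single ⟨j, hj⟩ (fun c _ hc => by rw [if_neg fun h => hc (Subtype.ext h).symm,
      mul_zero]) (by simp), if_pos rfl, mul_one]

end Pattern

theorem ncard_extremePoints_of_isSimplexPattern [Fintype ι] [DecidableEq ι] [Fintype κ]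
    {μ : Matrix κ ι ℝ} {J : κ → ι} (h : IsSimplexPattern μ J) :
    (((LinearMap.ker μ.mulVecLin : Set (ι → ℝ)) ∩ stdSimplex ℝ ι).extremePoints ℝ).ncard =
      Fintype.card ι - Fintype.card κ := by
  set u : {j // j ∉ range J} → ι → ℝ := fun c => extremeRay μ J c
  have hu : ∀ c c' : {j // j ∉ range J}, u c c' = if c' = c then 1 else 0 := fun c c' => by
    simp [u, extremeRay_apply_of_notMem c'.2, Subtype.ext_iff]
  have hu0 : ∀ c, 0 ≤ u c := fun c => extremeRay_nonneg h c.2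
  have hsum : ∀ c, 0 < ∑ j, u c j := fun c => lt_of_lt_of_le (by simp [hu c c])
    (single_le_sum (fun j _ => hu0 c j) (mem_univ c.1))
  have hw : IsPrivateCoords (fun c => (∑ j, u c j)⁻¹ • u c) Subtype.val :=
    ⟨fun c => by simp [hu c c, hsum c], fun c c' hc' => by simp [hu c' c, Ne.symm hc']⟩
  rw [inter_stdSimplex_eq_convexHull (fun c => extremeRay_mem_ker h) hu0 (fun c => (hsum c).ne')
      fun x hx hx0 => ⟨fun c => x c, fun c => hx0 c, sum_smul_extremeRay h hx⟩,
    extremePoints_convexHull_eq_range (fun c => smul_nonneg (inv_nonneg.2 (hsum c).le) (hu0 c)) hw,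
    ncard_range_of_injective hw.injective, Nat.card_eq_fintype_card, Fintype.card_subtype_compl,
    Set.card_range_of_injective h.injective]

theorem stmt_0_general (ℓ n : ℕ)
    (A : Matrix (Fin ℓ) (Fin n) ℤ)
    (hi : ∃ x ∈ ({x : Fin n → ℝ | ∀ i, ∑ j, (A i j : ℝ) * x j = 0} ∩ stdSimplex ℝ (Fin n)),
        ∀ j, 0 < x j)
    (hii : (A.map (Int.cast : ℤ → ℝ)).rank = ℓ) :
    (Set.extremePoints ℝ
        ({x : Fin n → ℝ | ∀ i, ∑ j, (A i j : ℝ) * x j = 0} ∩ stdSimplex ℝ (Fin n))).ncard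
      = n - ℓ ↔
    ∃ (μ : Fin ℓ → (Fin n → ℝ)) (J : Fin ℓ → Fin n), Function.Injective J ∧
      ({x : Fin n → ℝ | ∀ i, ∑ j, (A i j : ℝ) * x j = 0}
        = {x : Fin n → ℝ | ∀ i, ∑ j, x j * μ i j = 0}) ∧
      ∀ i, μ i (J i) < 0 ∧ (∀ k, k ≠ i → μ i (J k) = 0) ∧ (∀ j, j ≠ J i → 0 ≤ μ i j) := by
  set M := A.map (Int.cast : ℤ → ℝ)
  have hM : {x : Fin n → ℝ | ∀ i, ∑ j, (A i j : ℝ) * x j = 0} = LinearMap.ker M.mulVecLin :=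
    (coe_ker_mulVecLin M).symm
  have hker (μ : Matrix (Fin ℓ) (Fin n) ℝ) :
      {x : Fin n → ℝ | ∀ i, ∑ j, x j * μ i j = 0} = LinearMap.ker μ.mulVecLin := by
    simp_rw [coe_ker_mulVecLin, mul_comm]
  have hdim : ℓ + finrank ℝ (LinearMap.ker M.mulVecLin) = n := by
    have : M.rank + _ = _ := M.mulVecLin.finrank_range_add_finrank_ker
    rwa [hii, finrank_fin_fun] at this
  rw [hM] at hi ⊢
  obtain ⟨p, hpP, hp⟩ := hi
  constructor
  · intro hE
    obtain ⟨μ, J, h, hKμ⟩ := exists_isSimplexPattern_of_ncard_extremePoints (κ := Fin ℓ)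
      hpP hp (by omega) (by simpa using hdim)
    exact ⟨μ, J, h.injective, by rw [hKμ, hker], fun i => ⟨h.neg i, h.eq_zero i, h.nonneg i⟩⟩
  · rintro ⟨μ, J, hJ, hKμ, hμ⟩
    rw [hKμ, hker μ, ncard_extremePoints_of_isSimplexPattern
      ⟨hJ, fun i => (hμ i).1, fun i => (hμ i).2.1, fun i => (hμ i).2.2⟩]
    simp

/-- Under hypotheses (i), (ii), (iii), the polytope `P_A` has exactly `n - ℓ`
extreme points iff there are vectors `μ i` and pairwise distinct indices `J i` such that
`ker A = ⋂ i, (μ i)ᗮ` with the stated sign conditions. -/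
theorem stmt_0 (ℓ n : ℕ) (hℓ : 1 ≤ ℓ) (hn : ℓ ≤ n)
    (A : Matrix (Fin ℓ) (Fin n) ℤ)
    (hi : ∃ x ∈ ({x : Fin n → ℝ | ∀ i, ∑ j, (A i j : ℝ) * x j = 0} ∩ stdSimplex ℝ (Fin n)),
        ∀ j, 0 < x j)
    (hii : (A.map (Int.cast : ℤ → ℝ)).rank = ℓ)
    (hiii : ∀ j, ∃ i, A i j ≠ 0) :
    (Set.extremePoints ℝ
        ({x : Fin n → ℝ | ∀ i, ∑ j, (A i j : ℝ) * x j = 0} ∩ stdSimplex ℝ (Fin n))).ncard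
      = n - ℓ ↔
    ∃ (μ : Fin ℓ → (Fin n → ℝ)) (J : Fin ℓ → Fin n), Function.Injective J ∧
      ({x : Fin n → ℝ | ∀ i, ∑ j, (A i j : ℝ) * x j = 0}
        = {x : Fin n → ℝ | ∀ i, ∑ j, x j * μ i j = 0}) ∧
      ∀ i, μ i (J i) < 0 ∧ (∀ k, k ≠ i → μ i (J k) = 0) ∧ (∀ j, j ≠ J i → 0 ≤ μ i j) :=
  stmt_0_general ℓ n A hi hii
end

section
/- Under hypotheses (i), (ii), (iii), the polytope P_A has exactly n−ℓ extreme points if and only if there exist a permutation σ of the columns {1,…,n} and a matrix M ∈ ℤ^{ℓ×n} whose real kernel equals the real kernel of the column-permuted matrix A∘σ, such that M has the block form [D | C], where D is an ℓ×ℓ diagonal matrix with strictly negative diagonal entries and C is an ℓ×(n−ℓ) matrix all of whose entries are nonnegative. -/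
/-!
Write `K = ker A ⊆ ℝⁿ` (of dimension `m = n - ℓ` by full rank) and `P = K ∩ Δ`. Both sides of
the equivalence say that `K` has a *nonnegative coordinate basis*: coordinates `J k` and vectors
`u k ∈ K`, `u k ≥ 0`, with `u k ∘ J = e_k` and `x = ∑ x (J k) • u k` on `K`.

Given such a basis, `P` is the simplex spanned by the normalised `u k`, which has `m` vertices.
Conversely, if `P` has `m` vertices, the positive point of `P` shows that they span `K`, so they
form a basis of `K`, and every nonnegative vector of `K` has nonnegative coordinates in it. If the
support of a vertex were covered by the supports of the others, a small multiple of it could be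
subtracted from their sum without leaving the nonnegative orthant, giving a nonnegative vector
with a negative coordinate. Hence every vertex has a private coordinate.

A block form `[D | C]` hands us the basis `u k = (C_k / (-D), e_k)` on the last `m` coordinates.
In the other direction, after permuting the private coordinates to the end, Cramer's rule gives a
`d > 0` with `d • u` integral, and `[-d I | d u]` is the required block matrix.
-/

open Set Finset Filter Topology Matrix

theorem exists_pos_nonneg_add_smul {ι : Type*} [Fintype ι] {x v : ι → ℝ} (hx : 0 ≤ x)
    (hv : ∀ j, x j = 0 → 0 ≤ v j) : ∃ t : ℝ, 0 < t ∧ 0 ≤ x + t • v := by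
  have h : ∀ j, ∀ᶠ t in 𝓝[>] (0 : ℝ), 0 ≤ x j + t * v j := by
    intro j
    rcases (show 0 ≤ x j from hx j).eq_or_lt with h0 | hpos
    · filter_upwards [self_mem_nhdsWithin] with t ht
      rw [← h0, zero_add]
      exact mul_nonneg (le_of_lt ht) (hv j h0.symm)
    · have hlim : Tendsto (fun t => x j + t * v j) (𝓝[>] 0) (𝓝 (x j)) := by
        have : Continuous fun t : ℝ => x j + t * v j := by fun_prop
        simpa using (this.tendsto 0).mono_left nhdsWithin_le_nhds
      exact (hlim.eventually (lt_mem_nhds hpos)).mono fun t ht => ht.le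
  obtain ⟨t, ht, ht0⟩ := ((eventually_all.2 h).and self_mem_nhdsWithin).exists
  exact ⟨t, ht0, fun j => by simpa using ht j⟩

theorem exists_perm_comp_eq {α β : Type*} [Finite β] {f g : α → β} (hf : Function.Injective f)
    (hg : Function.Injective g) : ∃ σ : Equiv.Perm β, σ ∘ f = g := by
  classical
  let e : {b // b ∈ range f} ≃ {b // b ∈ range g} :=
    (Equiv.ofInjective f hf).symm.trans (Equiv.ofInjective g hg)
  refine ⟨e.extendSubtype, funext fun a => ?_⟩
  rw [Function.comp_apply, Equiv.extendSubtype_apply_of_mem e _ (mem_range_self a)]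
  simp [e, Equiv.ofInjective_symm_apply]

structure IsNonnegCoordBasis {ι κ : Type*} [Fintype κ] [DecidableEq κ]
    (K : Submodule ℝ (ι → ℝ)) (J : κ → ι) (u : κ → ι → ℝ) : Prop where
  mem : ∀ k, u k ∈ K
  nonneg : ∀ k, 0 ≤ u k
  comp_coord : ∀ k, u k ∘ J = Pi.single k 1
  eq_sum : ∀ x ∈ K, x = ∑ k, x (J k) • u k

namespace IsNonnegCoordBasis

variable {ι κ : Type*} [Fintype κ] [DecidableEq κ] {K : Submodule ℝ (ι → ℝ)} {J : κ → ι}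
  {u : κ → ι → ℝ}

theorem apply_coord (hu : IsNonnegCoordBasis K J u) (k k' : κ) :
    u k (J k') = if k' = k then 1 else 0 := by
  rw [← Function.comp_apply (f := u k), hu.comp_coord, Pi.single_apply]

theorem mem_iff (hu : IsNonnegCoordBasis K J u) {x : ι → ℝ} :
    x ∈ K ↔ x = ∑ k, x (J k) • u k :=
  ⟨hu.eq_sum x, fun h => h ▸ K.sum_mem fun k _ => K.smul_mem _ (hu.mem k)⟩

theorem eq_smul_of_apply_coord (hu : IsNonnegCoordBasis K J u) {x : ι → ℝ} (hx : x ∈ K)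
    {k : κ} {c : ℝ} (hxJ : ∀ k', x (J k') = if k' = k then c else 0) : x = c • u k := by
  rw [hu.eq_sum x hx, Finset.sum_eq_single k (fun k' _ hk' => by rw [hxJ, if_neg hk', zero_smul])
    (by simp), hxJ, if_pos rfl]

theorem submodule_eq {K' : Submodule ℝ (ι → ℝ)} (hu : IsNonnegCoordBasis K J u)
    (hu' : IsNonnegCoordBasis K' J u) : K = K' :=
  SetLike.ext fun _ => hu.mem_iff.trans hu'.mem_iff.symm

theorem injective_coord (hu : IsNonnegCoordBasis K J u) : Function.Injective J := by
  intro k k' h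
  have := hu.apply_coord k k'
  rw [← h, hu.apply_coord k k, if_pos rfl] at this
  by_contra hne
  rw [if_neg (Ne.symm hne)] at this
  exact one_ne_zero this

variable [Fintype ι]

theorem sum_pos (hu : IsNonnegCoordBasis K J u) (k : κ) : 0 < ∑ j, u k j :=
  calc (0 : ℝ) < u k (J k) := by rw [hu.apply_coord, if_pos rfl]; exact one_pos
    _ ≤ ∑ j, u k j := Finset.single_le_sum (fun j _ => hu.nonneg k j) (Finset.mem_univ _)

theorem inv_sum_smul_mem (hu : IsNonnegCoordBasis K J u) (k : κ) :
    (∑ j, u k j)⁻¹ • u k ∈ (K : Set (ι → ℝ)) ∩ stdSimplex ℝ ι := by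
  refine ⟨K.smul_mem _ (hu.mem k), fun j => ?_, ?_⟩
  · exact mul_nonneg (inv_nonneg.2 (hu.sum_pos k).le) (hu.nonneg k j)
  · simp only [Pi.smul_apply, smul_eq_mul, ← Finset.mul_sum]
    exact inv_mul_cancel₀ (hu.sum_pos k).ne'

theorem eq_of_apply_coord_eq_zero (hu : IsNonnegCoordBasis K J u) {x : ι → ℝ}
    (hx : x ∈ (K : Set (ι → ℝ)) ∩ stdSimplex ℝ ι) {k : κ} (h : ∀ k' ≠ k, x (J k') = 0) :
    x = (∑ j, u k j)⁻¹ • u k := by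
  have hxk : x = x (J k) • u k := hu.eq_smul_of_apply_coord hx.1 fun k' => by
    split_ifs with hk'
    · rw [hk']
    · exact h k' hk'
  have hsum : x (J k) * ∑ j, u k j = 1 := by
    rw [← hx.2.2, Finset.mul_sum]
    conv_rhs => rw [hxk]
    simp
  rw [hxk, eq_inv_of_mul_eq_one_left hsum]

theorem subset_convexHull (hu : IsNonnegCoordBasis K J u) :
    (K : Set (ι → ℝ)) ∩ stdSimplex ℝ ι ⊆ convexHull ℝ (range fun k => (∑ j, u k j)⁻¹ • u k) := by
  intro x hx
  have hxj : ∀ j, x j = ∑ k, x (J k) * u k j := fun j => by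
    simpa using congrFun (hu.eq_sum x hx.1) j
  refine mem_convexHull_of_exists_fintype (fun k => x (J k) * ∑ j, u k j) _
    (fun k => mul_nonneg (hx.2.1 _) (hu.sum_pos k).le) ?_ (fun k => mem_range_self k) ?_
  · simp_rw [Finset.mul_sum]
    rw [Finset.sum_comm, ← hx.2.2]
    exact Finset.sum_congr rfl fun j _ => (hxj j).symm
  · conv_rhs => rw [hu.eq_sum x hx.1]
    refine Finset.sum_congr rfl fun k _ => ?_
    rw [smul_smul, mul_assoc, mul_inv_cancel₀ (hu.sum_pos k).ne', mul_one]

theorem extremePoints_eq (hu : IsNonnegCoordBasis K J u) :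
    extremePoints ℝ ((K : Set (ι → ℝ)) ∩ stdSimplex ℝ ι) =
      range fun k => (∑ j, u k j)⁻¹ • u k := by
  refine subset_antisymm ?_ ?_
  · have hP : (K : Set (ι → ℝ)) ∩ stdSimplex ℝ ι =
        convexHull ℝ (range fun k => (∑ j, u k j)⁻¹ • u k) :=
      hu.subset_convexHull.antisymm <| convexHull_min (range_subset_iff.2 hu.inv_sum_smul_mem)
        (K.convex.inter (convex_stdSimplex ℝ ι))
    rw [hP]
    exact extremePoints_convexHull_subset
  · rintro _ ⟨k, rfl⟩
    refine mem_extremePoints_iff_left.2 ⟨hu.inv_sum_smul_mem k, fun x₁ hx₁ x₂ hx₂ hseg => ?_⟩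
    obtain ⟨a, b, ha, hb, -, hab⟩ := hseg
    refine hu.eq_of_apply_coord_eq_zero hx₁ fun k' hk' => ?_
    have hsum : a * x₁ (J k') + b * x₂ (J k') = 0 := by
      simpa [hu.apply_coord, hk'] using congrFun hab (J k')
    have := (add_eq_zero_iff_of_nonneg (mul_nonneg ha.le (hx₁.2.1 _))
      (mul_nonneg hb.le (hx₂.2.1 _))).1 hsum
    exact (mul_eq_zero.1 this.1).resolve_left ha.ne'

theorem ncard_extremePoints (hu : IsNonnegCoordBasis K J u) :
    (extremePoints ℝ ((K : Set (ι → ℝ)) ∩ stdSimplex ℝ ι)).ncard = Fintype.card κ := by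
  rw [hu.extremePoints_eq, ncard_range_of_injective, Nat.card_eq_fintype_card]
  intro k k' h
  by_contra hne
  have := congrFun h (J k)
  simp [hu.apply_coord, hne, (hu.sum_pos k).ne'] at this

end IsNonnegCoordBasis

theorem convexHull_range_subset_image_nonneg {ι κ : Type*} [Fintype κ] (w : κ → ι → ℝ) :
    convexHull ℝ (range w) ⊆ Fintype.linearCombination ℝ w '' Ici 0 := by
  classical
  refine convexHull_min (range_subset_iff.2 fun k => ⟨Pi.single k 1, fun k' => ?_, by simp⟩)
    ((convex_Ici 0).linear_image _)
  simp only [Pi.zero_apply, Pi.single_apply]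
  split_ifs <;> norm_num

section Vertices

variable {ι κ : Type*} [Fintype ι] [Fintype κ] {w : κ → ι → ℝ}

theorem nonneg_of_linearCombination_nonneg (hw : LinearIndependent ℝ w)
    (hwΔ : ∀ k, w k ∈ stdSimplex ℝ ι)
    (hP : (Submodule.span ℝ (range w) : Set (ι → ℝ)) ∩ stdSimplex ℝ ι ⊆ convexHull ℝ (range w))
    {a : κ → ℝ} (ha : 0 ≤ Fintype.linearCombination ℝ w a) : 0 ≤ a := by
  set y := Fintype.linearCombination ℝ w a
  have hinj := linearIndependent_iff_injective_fintypeLinearCombination.1 hw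
  have hsum : ∑ j, y j = ∑ k, a k := by
    simp only [y, Fintype.linearCombination_apply, Finset.sum_apply, Pi.smul_apply, smul_eq_mul]
    rw [Finset.sum_comm]
    simp [← Finset.mul_sum, (hwΔ _).2]
  rcases (hsum ▸ Finset.sum_nonneg fun j _ => ha j : 0 ≤ ∑ k, a k).eq_or_lt with h0 | hpos
  · have hy : y = 0 := funext fun j =>
      (Finset.sum_eq_zero_iff_of_nonneg fun j _ => ha j).1 (hsum.trans h0.symm) j (mem_univ j)
    rw [hinj (hy.trans (map_zero _).symm)]
  · have hmem : (∑ k, a k)⁻¹ • y ∈ convexHull ℝ (range w) := by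
      refine hP ⟨Submodule.smul_mem _ _ ?_, fun j => mul_nonneg (inv_nonneg.2 hpos.le) (ha j), ?_⟩
      · exact (Submodule.mem_span_range_iff_exists_fun ℝ).2
          ⟨a, (Fintype.linearCombination_apply ..).symm⟩
      · simp only [Pi.smul_apply, smul_eq_mul, ← Finset.mul_sum, hsum]
        exact inv_mul_cancel₀ hpos.ne'
    obtain ⟨c, hc, hcy⟩ := convexHull_range_subset_image_nonneg w hmem
    have hca : c = (∑ k, a k)⁻¹ • a := hinj (hcy.trans (map_smul _ _ _).symm)
    intro k
    simpa [hca, hpos] using hc k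

theorem exists_coord_pos_of_linearIndependent (hw : LinearIndependent ℝ w)
    (hwΔ : ∀ k, w k ∈ stdSimplex ℝ ι)
    (hP : (Submodule.span ℝ (range w) : Set (ι → ℝ)) ∩ stdSimplex ℝ ι ⊆ convexHull ℝ (range w))
    (k : κ) : ∃ j, 0 < w k j ∧ ∀ k' ≠ k, w k' j = 0 := by
  classical
  by_contra! hcon
  set b : κ → ℝ := fun k' => if k' = k then 0 else 1
  set z := Fintype.linearCombination ℝ w b
  have hz : ∀ j, z j = ∑ k', b k' * w k' j := fun j => by
    simp [z, Fintype.linearCombination_apply, Finset.sum_apply]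
  have hb : 0 ≤ b := fun k' => by simp only [b]; split_ifs <;> norm_num
  have hbw : ∀ j k', 0 ≤ b k' * w k' j := fun j k' => mul_nonneg (hb k') ((hwΔ k').1 j)
  have hsupp : ∀ j, z j = 0 → 0 ≤ (-w k) j := by
    intro j hj
    by_contra hneg
    obtain ⟨k', hk', hne⟩ := hcon j (by simpa using hneg)
    rw [hz, Finset.sum_eq_zero_iff_of_nonneg fun k'' _ => hbw j k''] at hj
    have := hj k' (mem_univ _)
    simp only [b, if_neg hk', one_mul] at this
    exact hne this
  obtain ⟨t, ht, hzt⟩ :=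
    exists_pos_nonneg_add_smul (fun j => (hz j).symm ▸ Finset.sum_nonneg fun k' _ => hbw j k')
      hsupp
  have hlc : z + t • -w k = Fintype.linearCombination ℝ w (b - Pi.single k t) := by
    rw [map_sub, Fintype.linearCombination_apply_single, smul_neg, sub_eq_add_neg]
  have hk := nonneg_of_linearCombination_nonneg hw hwΔ hP (hlc ▸ hzt) k
  simp only [b, Pi.zero_apply, Pi.sub_apply, ↓reduceIte, Pi.single_eq_same, zero_sub] at hk
  linarith

theorem exists_isNonnegCoordBasis_of_linearIndependent [DecidableEq κ]
    {K : Submodule ℝ (ι → ℝ)} (hw : LinearIndependent ℝ w)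
    (hwΔ : ∀ k, w k ∈ stdSimplex ℝ ι) (hspan : Submodule.span ℝ (range w) = K)
    (hP : (K : Set (ι → ℝ)) ∩ stdSimplex ℝ ι ⊆ convexHull ℝ (range w)) :
    ∃ (J : κ → ι) (u : κ → ι → ℝ), IsNonnegCoordBasis K J u := by
  subst hspan
  choose J hJpos hJzero using exists_coord_pos_of_linearIndependent hw hwΔ hP
  refine ⟨J, fun k => (w k (J k))⁻¹ • w k,
    ⟨fun k => ?_, fun k j => ?_, fun k => ?_, fun x hx => ?_⟩⟩
  · exact Submodule.smul_mem _ _ (Submodule.subset_span (mem_range_self k))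
  · exact mul_nonneg (inv_nonneg.2 (hJpos k).le) ((hwΔ k).1 j)
  · funext k'
    rcases eq_or_ne k' k with rfl | hk'
    · simp [(hJpos k').ne']
    · simp [hJzero k' k (Ne.symm hk'), hk']
  · obtain ⟨c, rfl⟩ := (Submodule.mem_span_range_iff_exists_fun ℝ).1 hx
    refine Finset.sum_congr rfl fun k _ => ?_
    have hck : (∑ k', c k' • w k') (J k) = c k * w k (J k) := by
      rw [Finset.sum_apply, Finset.sum_eq_single k (fun k' _ hk' => by simp [hJzero k k' hk'])
        (by simp)]
      simp
    rw [hck, smul_smul, mul_assoc, mul_inv_cancel₀ (hJpos k).ne', mul_one]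

theorem le_span_inter_stdSimplex {K : Submodule ℝ (ι → ℝ)} {x₀ : ι → ℝ}
    (hx₀ : x₀ ∈ (K : Set (ι → ℝ)) ∩ stdSimplex ℝ ι) (hpos : ∀ j, 0 < x₀ j) :
    K ≤ Submodule.span ℝ ((K : Set (ι → ℝ)) ∩ stdSimplex ℝ ι) := by
  intro v hv
  set v₀ := v - (∑ j, v j) • x₀
  obtain ⟨t, ht, hnonneg⟩ := exists_pos_nonneg_add_smul (fun j => (hpos j).le)
    (v := v₀) fun j h => absurd h (hpos j).ne'
  have hmem : x₀ + t • v₀ ∈ (K : Set (ι → ℝ)) ∩ stdSimplex ℝ ι := by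
    refine ⟨K.add_mem hx₀.1 (K.smul_mem _ (K.sub_mem hv (K.smul_mem _ hx₀.1))), hnonneg, ?_⟩
    simp [v₀, Finset.sum_add_distrib, Finset.sum_sub_distrib, ← Finset.mul_sum, hx₀.2.2]
  have hv : v = t⁻¹ • ((x₀ + t • v₀) - x₀) + (∑ j, v j) • x₀ := by
    rw [add_sub_cancel_left, smul_smul, inv_mul_cancel₀ ht.ne', one_smul, sub_add_cancel]
  rw [hv]
  exact Submodule.add_mem _ (Submodule.smul_mem _ _ (Submodule.sub_mem _
    (Submodule.subset_span hmem) (Submodule.subset_span hx₀)))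
    (Submodule.smul_mem _ _ (Submodule.subset_span hx₀))

theorem exists_isNonnegCoordBasis_of_ncard_extremePoints {K : Submodule ℝ (ι → ℝ)} {m : ℕ}
    {x₀ : ι → ℝ} (hx₀ : x₀ ∈ (K : Set (ι → ℝ)) ∩ stdSimplex ℝ ι) (hpos : ∀ j, 0 < x₀ j)
    (hK : Module.finrank ℝ K = m)
    (hE : (extremePoints ℝ ((K : Set (ι → ℝ)) ∩ stdSimplex ℝ ι)).ncard = m) :
    ∃ (J : Fin m → ι) (u : Fin m → ι → ℝ), IsNonnegCoordBasis K J u := by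
  set P := (K : Set (ι → ℝ)) ∩ stdSimplex ℝ ι
  have hm : m ≠ 0 := by
    rw [← hK, Ne, Submodule.finrank_eq_zero]
    rintro rfl
    have hx0 : x₀ = 0 := (Submodule.mem_bot ℝ).1 hx₀.1
    simpa [hx0] using hx₀.2.2
  have hEfin : (extremePoints ℝ P).Finite := Set.finite_of_ncard_ne_zero (hE ▸ hm)
  have hPE : P = convexHull ℝ (extremePoints ℝ P) := by
    have hPc : IsCompact P := (isCompact_stdSimplex ℝ ι).inter_left K.closed_of_finiteDimensional
    rw [← (hEfin.isClosed_convexHull ℝ).closure_eq,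
      closure_convexHull_extremePoints hPc (K.convex.inter (convex_stdSimplex ℝ ι))]
  have : Finite (extremePoints ℝ P) := hEfin.to_subtype
  let e : Fin m ≃ extremePoints ℝ P :=
    (Finite.equivFinOfCardEq (by rw [Nat.card_coe_set_eq, hE])).symm
  let w : Fin m → ι → ℝ := fun k => e k
  have hw : range w = extremePoints ℝ P := by
    simp only [w, ← Function.comp_def (f := Subtype.val), e.surjective.range_comp,
      Subtype.range_coe]
  rw [← hw] at hPE
  have hwP : ∀ k, w k ∈ P := fun k => extremePoints_subset (e k).2
  have hspan : Submodule.span ℝ (range w) = K := by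
    refine le_antisymm (Submodule.span_le.2 (range_subset_iff.2 fun k => (hwP k).1)) ?_
    exact (le_span_inter_stdSimplex hx₀ hpos).trans <| Submodule.span_le.2 <|
      hPE.subset.trans (convexHull_min Submodule.subset_span (Submodule.convex _))
  have hli : LinearIndependent ℝ w := linearIndependent_iff_card_eq_finrank_span.2 <| by
    rw [Set.finrank, hspan, hK, Fintype.card_fin]
  exact exists_isNonnegCoordBasis_of_linearIndependent hli (fun k => (hwP k).2) hspan hPE.subset

end Vertices

section IntegerKernel

variable {r ι κ : Type*} [Fintype ι]

def realKer (A : Matrix r ι ℤ) : Submodule ℝ (ι → ℝ) :=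
  LinearMap.ker (A.map (Int.cast : ℤ → ℝ)).mulVecLin

theorem mem_realKer {A : Matrix r ι ℤ} {x : ι → ℝ} :
    x ∈ realKer A ↔ ∀ i, ∑ j, (A i j : ℝ) * x j = 0 := by
  simp [realKer, funext_iff, Matrix.mulVec, dotProduct]

theorem coe_realKer (A : Matrix r ι ℤ) :
    (realKer A : Set (ι → ℝ)) = {x | ∀ i, ∑ j, (A i j : ℝ) * x j = 0} :=
  Set.ext fun _ => mem_realKer

theorem coe_realKer_submatrix (A : Matrix r ι ℤ) (σ : Equiv.Perm ι) :
    (realKer (A.submatrix id σ) : Set (ι → ℝ)) = {x | ∀ i, ∑ j, (A i (σ j) : ℝ) * x j = 0} :=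
  coe_realKer _

theorem rank_add_finrank_realKer (A : Matrix r ι ℤ) :
    (A.map (Int.cast : ℤ → ℝ)).rank + Module.finrank ℝ (realKer A) = Fintype.card ι := by
  rw [Matrix.rank, realKer, LinearMap.finrank_range_add_finrank_ker,
    Module.finrank_fintype_fun_eq_card]

theorem mem_realKer_submatrix {A : Matrix r ι ℤ} (σ : Equiv.Perm ι) {x : ι → ℝ} :
    x ∈ realKer (A.submatrix id σ) ↔ x ∘ σ.symm ∈ realKer A := by
  simp only [mem_realKer, Matrix.submatrix_apply, id, Function.comp_apply]
  refine forall_congr' fun i => ?_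
  rw [← Equiv.sum_comp σ (fun q => (A i q : ℝ) * x (σ.symm q))]
  simp

theorem intCast_comp_mem_realKer {A : Matrix r ι ℤ} {v : ι → ℤ} (hv : A *ᵥ v = 0) :
    ((↑) ∘ v : ι → ℝ) ∈ realKer A :=
  mem_realKer.2 fun i => by
    simpa [Matrix.mulVec, dotProduct] using congrArg (Int.cast : ℤ → ℝ) (congrFun hv i)

namespace IsNonnegCoordBasis

variable [Fintype κ] [DecidableEq κ] {J : κ → ι} {u : κ → ι → ℝ} {A : Matrix r ι ℤ}

theorem submatrix (hu : IsNonnegCoordBasis (realKer A) J u) (σ : Equiv.Perm ι) :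
    IsNonnegCoordBasis (realKer (A.submatrix id σ)) (σ.symm ∘ J) (fun k => u k ∘ σ) where
  mem k := (mem_realKer_submatrix σ).2 (by simpa [Function.comp_assoc] using hu.mem k)
  nonneg k j := hu.nonneg k (σ j)
  comp_coord k := funext fun k' => by simpa using congrFun (hu.comp_coord k) k'
  eq_sum x hx := by
    funext j
    simpa [Finset.sum_apply] using congrFun (hu.eq_sum _ ((mem_realKer_submatrix σ).1 hx)) (σ j)

/-- Up to sign, `d • u k` is the Cramer's-rule solution of the square integer system
`A x = 0`, `x ∘ J = d • e_k`, where `d` is the determinant of that system. -/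
theorem exists_intCast_eq_mul [Fintype r] (hu : IsNonnegCoordBasis (realKer A) J u)
    (hcard : Fintype.card r + Fintype.card κ = Fintype.card ι) :
    ∃ d : ℤ, 0 < d ∧ ∃ N : κ → ι → ℤ, ∀ k j, (N k j : ℝ) = d * u k j := by
  classical
  let e : ι ≃ r ⊕ κ := Fintype.equivOfCardEq (by rw [Fintype.card_sum, hcard])
  let B : Matrix ι ι ℤ := (Matrix.fromRows A (Matrix.of fun k => Pi.single (J k) 1)).submatrix e id
  have hB : ∀ v s, (B *ᵥ v) (e.symm s) = Sum.elim (A *ᵥ v) (v ∘ J) s := by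
    intro v s
    rcases s with i | k <;> simp [B, Matrix.mulVec, dotProduct, Pi.single_apply]
  have hdet : B.det ≠ 0 := by
    intro h0
    obtain ⟨v, hv0, hBv⟩ := Matrix.exists_mulVec_eq_zero_iff.2 h0
    have hAv : A *ᵥ v = 0 := funext fun i => by simpa [hBv] using (hB v (.inl i)).symm
    have hvJ : ∀ k, v (J k) = 0 := fun k => by simpa [hBv] using (hB v (.inr k)).symm
    refine hv0 (funext fun j => ?_)
    have := congrFun (hu.eq_sum _ (intCast_comp_mem_realKer hAv)) j
    simp only [Function.comp_apply, hvJ, Int.cast_zero, zero_smul, Finset.sum_const_zero,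
      Pi.zero_apply] at this
    exact_mod_cast this
  have hcol : ∀ k, ∃ v : ι → ℤ, ∀ j, (v j : ℝ) = B.det * u k j := by
    intro k
    set v := B.cramer (Pi.single (e.symm (.inr k)) 1)
    have hBv : ∀ s, Sum.elim (A *ᵥ v) (v ∘ J) s = B.det * if s = .inr k then 1 else 0 := by
      intro s
      rw [← hB, Matrix.mulVec_cramer]
      simp [Pi.single_apply]
    have hAv : A *ᵥ v = 0 := funext fun i => by simpa using hBv (.inl i)
    have hvJ : ∀ k', ((↑) ∘ v : ι → ℝ) (J k') = if k' = k then (B.det : ℝ) else 0 := fun k' => by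
      simpa [apply_ite] using congrArg (Int.cast : ℤ → ℝ) (hBv (.inr k'))
    exact ⟨v, congrFun (hu.eq_smul_of_apply_coord (intCast_comp_mem_realKer hAv) hvJ)⟩
  choose v hv using hcol
  refine ⟨|B.det|, abs_pos.2 hdet, fun k j => B.det.sign * v k j, fun k j => ?_⟩
  rw [Int.cast_mul, hv, ← mul_assoc, ← Int.cast_mul, Int.sign_mul_self_eq_abs]

end IsNonnegCoordBasis

end IntegerKernel

section BlockForm

variable {ℓ m : ℕ}

def IsNegDiagBlockForm {n : ℕ} (M : Matrix (Fin ℓ) (Fin n) ℤ) : Prop :=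
  (∀ (i : Fin ℓ) (j : Fin n), (j : ℕ) < ℓ →
    (((j : ℕ) = (i : ℕ) → M i j < 0) ∧ ((j : ℕ) ≠ (i : ℕ) → M i j = 0))) ∧
  (∀ (i : Fin ℓ) (j : Fin n), ℓ ≤ (j : ℕ) → 0 ≤ M i j)

theorem eq_sum_natAdd_iff {u : Fin m → Fin (ℓ + m) → ℝ}
    (hu : ∀ k, u k ∘ Fin.natAdd ℓ = Pi.single k 1) {x : Fin (ℓ + m) → ℝ} :
    x = ∑ k, x (Fin.natAdd ℓ k) • u k ↔
      ∀ i, x (Fin.castAdd m i) = ∑ k, x (Fin.natAdd ℓ k) * u k (Fin.castAdd m i) := by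
  rw [funext_iff, Fin.forall_fin_add]
  simp only [Finset.sum_apply, Pi.smul_apply, smul_eq_mul, and_iff_left_iff_imp]
  intro _ k
  have : ∀ k', u k' (Fin.natAdd ℓ k) = (Pi.single k' 1 : Fin m → ℝ) k :=
    fun k' => congrFun (hu k') k
  simp [this, Pi.single_apply]

noncomputable def blockBasis (M : Matrix (Fin ℓ) (Fin (ℓ + m)) ℤ) (k : Fin m) : Fin (ℓ + m) → ℝ :=
  Fin.append (fun i => (M i (Fin.natAdd ℓ k) : ℝ) / -(M i (Fin.castAdd m i) : ℝ)) (Pi.single k 1)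

theorem blockBasis_comp_natAdd (M : Matrix (Fin ℓ) (Fin (ℓ + m)) ℤ) (k : Fin m) :
    blockBasis M k ∘ Fin.natAdd ℓ = Pi.single k 1 :=
  funext fun _ => by simp [blockBasis]

namespace IsNegDiagBlockForm

variable {M : Matrix (Fin ℓ) (Fin (ℓ + m)) ℤ}

theorem diag_neg (hM : IsNegDiagBlockForm M) (i : Fin ℓ) : M i (Fin.castAdd m i) < 0 :=
  (hM.1 i _ (by simp)).1 (by simp)

theorem offDiag_eq_zero (hM : IsNegDiagBlockForm M) {i i' : Fin ℓ} (h : i' ≠ i) :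
    M i (Fin.castAdd m i') = 0 :=
  (hM.1 i _ (by simp)).2 (by simpa [Fin.val_inj] using h)

theorem right_nonneg (hM : IsNegDiagBlockForm M) (i : Fin ℓ) (k : Fin m) :
    0 ≤ M i (Fin.natAdd ℓ k) :=
  hM.2 i _ (by simp)

theorem sum_mul_eq (hM : IsNegDiagBlockForm M) (i : Fin ℓ) (x : Fin (ℓ + m) → ℝ) :
    ∑ j, (M i j : ℝ) * x j = M i (Fin.castAdd m i) * x (Fin.castAdd m i) +
      ∑ k, (M i (Fin.natAdd ℓ k) : ℝ) * x (Fin.natAdd ℓ k) := by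
  rw [Fin.sum_univ_add, Finset.sum_eq_single i
    (fun i' _ h => by simp [hM.offDiag_eq_zero h]) (by simp)]

theorem isNonnegCoordBasis (hM : IsNegDiagBlockForm M) :
    IsNonnegCoordBasis (realKer M) (Fin.natAdd ℓ) (blockBasis M) where
  mem k := mem_realKer.2 fun i => by
    have hne : (M i (Fin.castAdd m i) : ℝ) ≠ 0 := by exact_mod_cast (hM.diag_neg i).ne
    rw [hM.sum_mul_eq, Finset.sum_eq_single k (fun k' _ h => by simp [blockBasis, h]) (by simp)]
    simp only [blockBasis, Fin.append_left, Fin.append_right, Pi.single_eq_same, mul_one]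
    field_simp
    ring
  nonneg k j := by
    refine Fin.addCases (fun i => ?_) (fun k' => ?_) j
    · have hd : (M i (Fin.castAdd m i) : ℝ) < 0 := by exact_mod_cast hM.diag_neg i
      have hc : (0 : ℝ) ≤ M i (Fin.natAdd ℓ k) := by exact_mod_cast hM.right_nonneg i k
      simp only [blockBasis, Fin.append_left, Pi.zero_apply]
      exact div_nonneg hc (neg_nonneg.2 hd.le)
    · simp only [blockBasis, Fin.append_right, Pi.zero_apply, Pi.single_apply]
      split_ifs <;> norm_num
  comp_coord := blockBasis_comp_natAdd M
  eq_sum x hx := (eq_sum_natAdd_iff (blockBasis_comp_natAdd M)).2 fun i => by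
    have hne : (M i (Fin.castAdd m i) : ℝ) ≠ 0 := by exact_mod_cast (hM.diag_neg i).ne
    have hrow := mem_realKer.1 hx i
    rw [hM.sum_mul_eq] at hrow
    simp only [blockBasis, Fin.append_left, mul_comm (x _)]
    simp_rw [div_mul_eq_mul_div, ← Finset.sum_div]
    rw [eq_div_iff (neg_ne_zero.2 hne)]
    linear_combination -hrow

end IsNegDiagBlockForm

def blockMatrix (d : ℤ) (N : Fin m → Fin (ℓ + m) → ℤ) : Matrix (Fin ℓ) (Fin (ℓ + m)) ℤ :=
  Matrix.of fun i => Fin.append (fun i' => if i' = i then -d else 0) fun k => N k (Fin.castAdd m i)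

theorem isNegDiagBlockForm_blockMatrix {d : ℤ} (hd : 0 < d) {N : Fin m → Fin (ℓ + m) → ℤ}
    (hN : ∀ k j, 0 ≤ N k j) : IsNegDiagBlockForm (blockMatrix d N) := by
  refine ⟨fun i j hj => ?_, fun i j hj => ?_⟩ <;> induction j using Fin.addCases
  · simp +contextual [blockMatrix, Fin.val_inj, hd]
  · simp at hj
  · simp only [Fin.val_castAdd] at hj
    omega
  · simp [blockMatrix, hN]

theorem blockBasis_blockMatrix {d : ℤ} (hd : 0 < d) {N : Fin m → Fin (ℓ + m) → ℤ}
    {u : Fin m → Fin (ℓ + m) → ℝ} (hN : ∀ k j, (N k j : ℝ) = d * u k j)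
    (hu : ∀ k, u k ∘ Fin.natAdd ℓ = Pi.single k 1) : blockBasis (blockMatrix d N) = u := by
  funext k j
  refine Fin.addCases (fun i => ?_) (fun k' => ?_) j
  · have : (d : ℝ) ≠ 0 := by exact_mod_cast hd.ne'
    simp only [blockBasis, blockMatrix, of_apply, Fin.append_right, hN, Fin.append_left,
      ↓reduceIte, Int.cast_neg, neg_neg]
    field_simp
  · simp [blockBasis, ← hu k]

end BlockForm

theorem stmt_1_general (ℓ n : ℕ)
    (A : Matrix (Fin ℓ) (Fin n) ℤ)
    (hi : ∃ x ∈ ({x : Fin n → ℝ | ∀ i, ∑ j, (A i j : ℝ) * x j = 0} ∩ stdSimplex ℝ (Fin n)),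
        ∀ j, 0 < x j)
    (hii : (A.map (Int.cast : ℤ → ℝ)).rank = ℓ) :
    (Set.extremePoints ℝ
        ({x : Fin n → ℝ | ∀ i, ∑ j, (A i j : ℝ) * x j = 0} ∩ stdSimplex ℝ (Fin n))).ncard
      = n - ℓ ↔
    ∃ (σ : Equiv.Perm (Fin n)) (M : Matrix (Fin ℓ) (Fin n) ℤ),
      ({x : Fin n → ℝ | ∀ i, ∑ j, (M i j : ℝ) * x j = 0}
        = {x : Fin n → ℝ | ∀ i, ∑ j, (A i (σ j) : ℝ) * x j = 0}) ∧
      (∀ (i : Fin ℓ) (j : Fin n), (j : ℕ) < ℓ →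
        (((j : ℕ) = (i : ℕ) → M i j < 0) ∧ ((j : ℕ) ≠ (i : ℕ) → M i j = 0))) ∧
      (∀ (i : Fin ℓ) (j : Fin n), ℓ ≤ (j : ℕ) → 0 ≤ M i j) := by
  obtain ⟨m, hm⟩ : ∃ m, Module.finrank ℝ (realKer A) = m := ⟨_, rfl⟩
  have hℓm : ℓ + m = n := by simpa [hii, hm] using rank_add_finrank_realKer A
  subst hℓm
  rw [← coe_realKer, add_tsub_cancel_left]
  constructor
  · intro hE
    obtain ⟨x₀, hx₀, hpos⟩ := hi
    rw [← coe_realKer] at hx₀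
    obtain ⟨J, u, hu⟩ := exists_isNonnegCoordBasis_of_ncard_extremePoints hx₀ hpos hm hE
    obtain ⟨σ, hσ⟩ := exists_perm_comp_eq (Fin.natAdd_injective m ℓ) hu.injective_coord
    have hu' : IsNonnegCoordBasis (realKer (A.submatrix id σ)) (Fin.natAdd ℓ)
        (fun k => u k ∘ σ) := by
      simpa [← hσ, ← Function.comp_assoc] using hu.submatrix σ
    obtain ⟨d, hd, N, hN⟩ := hu'.exists_intCast_eq_mul (by simp)
    have hM := isNegDiagBlockForm_blockMatrix hd (N := N) fun k j => by
      have : (0 : ℝ) ≤ N k j := hN k j ▸ mul_nonneg (by exact_mod_cast hd.le) (hu'.nonneg k j)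
      exact_mod_cast this
    refine ⟨σ, blockMatrix d N, ?_, hM.1, hM.2⟩
    rw [← coe_realKer, ← coe_realKer_submatrix]
    congr 1
    exact (blockBasis_blockMatrix hd hN hu'.comp_coord ▸ hM.isNonnegCoordBasis).submodule_eq hu'
  · rintro ⟨σ, M, hker, hM⟩
    rw [← coe_realKer, ← coe_realKer_submatrix, SetLike.coe_set_eq] at hker
    have hbasis := hker ▸ IsNegDiagBlockForm.isNonnegCoordBasis (M := M) hM
    simpa using (hbasis.submatrix σ.symm).ncard_extremePoints

/-- Under hypotheses (i), (ii), (iii), `P_A` has exactly `n - ℓ` extreme points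
iff, after a column permutation `σ`, the real kernel of `A` agrees with that of an integer
matrix `M` in block form `[D | C]` with `D` diagonal with negative diagonal entries and `C`
entrywise nonnegative. -/
theorem stmt_1 (ℓ n : ℕ) (hℓ : 1 ≤ ℓ) (hn : ℓ ≤ n)
    (A : Matrix (Fin ℓ) (Fin n) ℤ)
    (hi : ∃ x ∈ ({x : Fin n → ℝ | ∀ i, ∑ j, (A i j : ℝ) * x j = 0} ∩ stdSimplex ℝ (Fin n)),
        ∀ j, 0 < x j)
    (hii : (A.map (Int.cast : ℤ → ℝ)).rank = ℓ)
    (hiii : ∀ j, ∃ i, A i j ≠ 0) :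
    (Set.extremePoints ℝ
        ({x : Fin n → ℝ | ∀ i, ∑ j, (A i j : ℝ) * x j = 0} ∩ stdSimplex ℝ (Fin n))).ncard
      = n - ℓ ↔
    ∃ (σ : Equiv.Perm (Fin n)) (M : Matrix (Fin ℓ) (Fin n) ℤ),
      ({x : Fin n → ℝ | ∀ i, ∑ j, (M i j : ℝ) * x j = 0}
        = {x : Fin n → ℝ | ∀ i, ∑ j, (A i (σ j) : ℝ) * x j = 0}) ∧
      (∀ (i : Fin ℓ) (j : Fin n), (j : ℕ) < ℓ →
        (((j : ℕ) = (i : ℕ) → M i j < 0) ∧ ((j : ℕ) ≠ (i : ℕ) → M i j = 0))) ∧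
      (∀ (i : Fin ℓ) (j : Fin n), ℓ ≤ (j : ℕ) → 0 ≤ M i j) :=
  stmt_1_general ℓ n A hi hii
end

section
/- Let 1 ≤ ℓ < n and let M = [D | C] be a real ℓ×n matrix in block form, where D = diag(d_1,…,d_ℓ) with every d_k < 0 and C = (c_{k,j}) is an ℓ×(n−ℓ) matrix with all entries c_{k,j} ≥ 0. For j = 1,…,n−ℓ define ν_j := (1 + Σ_{k=1}^ℓ (−c_{k,j}/d_k))^{−1} · (−c_{1,j}/d_1, …, −c_{ℓ,j}/d_ℓ, 0, …, 0, 1, 0, …, 0) ∈ ℝ^n, where the entry 1 is in position ℓ+j. Then P_M := ker(M) ∩ Δ^{n−1} equals the convex hull of {ν_1,…,ν_{n−ℓ}}, and the extreme points of P_M are exactly ν_1,…,ν_{n−ℓ}. -/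
/-!
On `ker M` each pivot coordinate is a fixed nonnegative combination of the free coordinates,
`x k = ∑ j r k j * x (ℓ + j)` with `r k j = -c k j / d k`. Hence every `x ∈ P_M` is the convex
combination `∑ j x (ℓ + j) (1 + ∑ k r k j) • ν j`, the weights summing to `∑ p x p = 1`. Each
`ν j` is exposed by the functional `x ↦ x (ℓ + j) (1 + ∑ k r k j)`: it is at most `1` on `P_M`
and equals `1` only where all other weights vanish, i.e. only at `ν j`.
-/

open Finset

namespace BlockKernel

variable {ℓ n : ℕ} (hℓn : ℓ < n)

def pivot (k : Fin ℓ) : Fin n := ⟨k, k.isLt.trans hℓn⟩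

def free (ℓ : ℕ) {n : ℕ} (j : Fin (n - ℓ)) : Fin n := ⟨ℓ + j, Nat.add_lt_of_lt_sub' j.isLt⟩

theorem sum_eq_sum_pivot_add_sum_free {β : Type*} [AddCommMonoid β] (f : Fin n → β) :
    ∑ p, f p = ∑ k, f (pivot hℓn k) + ∑ j, f (free ℓ j) := by
  have hn : ℓ + (n - ℓ) = n := by omega
  rw [← (finCongr hn).sum_comp f, Fin.sum_univ_add]
  rfl

theorem funext_pivot_free {α : Type*} {x y : Fin n → α}
    (hpivot : ∀ k, x (pivot hℓn k) = y (pivot hℓn k))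
    (hfree : ∀ j, x (free ℓ j) = y (free ℓ j)) : x = y := by
  funext p
  by_cases hp : (p : ℕ) < ℓ
  · exact hpivot ⟨p, hp⟩
  · have : p = free ℓ ⟨p - ℓ, by omega⟩ := Fin.ext (by simp only [free]; omega)
    rw [this]
    exact hfree _

theorem eq_zero_of_sum_eq_one_of_one_le {ι : Type*} [Fintype ι] [DecidableEq ι] {w : ι → ℝ}
    (hw0 : ∀ i, 0 ≤ w i) (hw1 : ∑ i, w i = 1) {j : ι} (hj : 1 ≤ w j) {i : ι} (hij : i ≠ j) :
    w i = 0 := by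
  have hsplit := add_sum_erase univ w (mem_univ j)
  have hle := single_le_sum (fun k _ => hw0 k) (mem_erase.2 ⟨hij, mem_univ i⟩)
  linarith [hw0 i]

variable (M : Matrix (Fin ℓ) (Fin n) ℝ)

noncomputable def ratio (k : Fin ℓ) (j : Fin (n - ℓ)) : ℝ :=
  -M k (free ℓ j) / M k (pivot hℓn k)

noncomputable def weight (j : Fin (n - ℓ)) : ℝ :=
  1 + ∑ k, ratio hℓn M k j

noncomputable def vertex (j : Fin (n - ℓ)) (p : Fin n) : ℝ :=
  (weight hℓn M j)⁻¹ *
    if h : (p : ℕ) < ℓ then ratio hℓn M ⟨p, h⟩ j else if (p : ℕ) = ℓ + j then 1 else 0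

theorem vertex_apply_pivot (j : Fin (n - ℓ)) (k : Fin ℓ) :
    vertex hℓn M j (pivot hℓn k) = (weight hℓn M j)⁻¹ * ratio hℓn M k j :=
  congrArg _ (dif_pos k.isLt)

theorem vertex_apply_free (j j' : Fin (n - ℓ)) :
    vertex hℓn M j (free ℓ j') = if j' = j then (weight hℓn M j)⁻¹ else 0 := by
  simp [vertex, free, Fin.ext_iff]

theorem vertex_apply_pivot_eq_sum (j : Fin (n - ℓ)) (k : Fin ℓ) :
    vertex hℓn M j (pivot hℓn k) = ∑ j', ratio hℓn M k j' * vertex hℓn M j (free ℓ j') := by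
  simp [vertex_apply_pivot, vertex_apply_free, mul_comm]

variable {hℓn M} in
theorem sum_free_mul_weight {x : Fin n → ℝ}
    (hker : ∀ k, x (pivot hℓn k) = ∑ j, ratio hℓn M k j * x (free ℓ j)) :
    ∑ j, x (free ℓ j) * weight hℓn M j = ∑ p, x p := by
  rw [sum_eq_sum_pivot_add_sum_free hℓn x]
  simp only [hker, weight, mul_add, mul_one, mul_sum, sum_add_distrib]
  rw [sum_comm, add_comm]
  simp only [mul_comm]

variable {hℓn M} in
theorem eq_sum_smul_vertex {x : Fin n → ℝ}
    (hker : ∀ k, x (pivot hℓn k) = ∑ j, ratio hℓn M k j * x (free ℓ j))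
    (hw : ∀ j, weight hℓn M j ≠ 0) :
    x = ∑ j, (x (free ℓ j) * weight hℓn M j) • vertex hℓn M j := by
  refine funext_pivot_free hℓn (fun k => ?_) (fun j' => ?_) <;>
    simp only [Finset.sum_apply, Pi.smul_apply, smul_eq_mul, vertex_apply_pivot, vertex_apply_free]
  · rw [hker]
    refine sum_congr rfl fun j _ => ?_
    field_simp [hw j]
  · simp [hw j']

theorem sum_vertex {j : Fin (n - ℓ)} (hw : weight hℓn M j ≠ 0) : ∑ p, vertex hℓn M j p = 1 := by
  rw [← sum_free_mul_weight (vertex_apply_pivot_eq_sum hℓn M j)]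
  simp [vertex_apply_free, hw]

structure IsBlockForm : Prop where
  pivot_off_diag : ∀ i k, k ≠ i → M i (pivot hℓn k) = 0
  pivot_diag_neg : ∀ k, M k (pivot hℓn k) < 0
  free_nonneg : ∀ i j, 0 ≤ M i (free ℓ j)

def kerSimplex : Set (Fin n → ℝ) :=
  {x | ∀ i, ∑ p, M i p * x p = 0} ∩ stdSimplex ℝ (Fin n)

theorem convex_kerSimplex : Convex ℝ (kerSimplex M) := by
  refine Convex.inter ?_ (convex_stdSimplex ℝ (Fin n))
  simp_rw [Set.ofPred_forall]
  exact convex_iInter fun i =>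
    convex_hyperplane (LinearMap.proj (R := ℝ) i ∘ₗ M.mulVecLin).isLinear 0

namespace IsBlockForm

variable {hℓn M}

theorem mem_ker_iff (hM : IsBlockForm hℓn M) {x : Fin n → ℝ} :
    (∀ i, ∑ p, M i p * x p = 0) ↔ ∀ k, x (pivot hℓn k) = ∑ j, ratio hℓn M k j * x (free ℓ j) := by
  refine forall_congr' fun k => ?_
  have hrow : ∑ p, M k p * x p
      = M k (pivot hℓn k) * x (pivot hℓn k) + ∑ j, M k (free ℓ j) * x (free ℓ j) := by
    rw [sum_eq_sum_pivot_add_sum_free hℓn,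
      Fintype.sum_eq_single k fun i hi => by rw [hM.pivot_off_diag k i hi, zero_mul]]
  have hratio : ∑ j, ratio hℓn M k j * x (free ℓ j)
      = -(∑ j, M k (free ℓ j) * x (free ℓ j)) / M k (pivot hℓn k) := by
    simp only [ratio, neg_div, neg_mul, sum_neg_distrib, div_mul_eq_mul_div, ← sum_div]
  rw [hrow, hratio, eq_div_iff (hM.pivot_diag_neg k).ne]
  constructor <;> intro h <;> linarith

theorem ratio_nonneg (hM : IsBlockForm hℓn M) (k : Fin ℓ) (j : Fin (n - ℓ)) :
    0 ≤ ratio hℓn M k j :=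
  div_nonneg_of_nonpos (neg_nonpos.2 (hM.free_nonneg k j)) (hM.pivot_diag_neg k).le

theorem weight_pos (hM : IsBlockForm hℓn M) (j : Fin (n - ℓ)) : 0 < weight hℓn M j :=
  add_pos_of_pos_of_nonneg one_pos (sum_nonneg fun k _ => hM.ratio_nonneg k j)

theorem vertex_nonneg (hM : IsBlockForm hℓn M) (j : Fin (n - ℓ)) (p : Fin n) :
    0 ≤ vertex hℓn M j p := by
  refine mul_nonneg (inv_nonneg.2 (hM.weight_pos j).le) ?_
  split_ifs
  exacts [hM.ratio_nonneg _ j, zero_le_one, le_rfl]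

theorem vertex_mem_kerSimplex (hM : IsBlockForm hℓn M) (j : Fin (n - ℓ)) :
    vertex hℓn M j ∈ kerSimplex M :=
  ⟨hM.mem_ker_iff.2 (vertex_apply_pivot_eq_sum hℓn M j), hM.vertex_nonneg j,
    sum_vertex hℓn M (hM.weight_pos j).ne'⟩

theorem kerSimplex_eq_convexHull (hM : IsBlockForm hℓn M) :
    kerSimplex M = convexHull ℝ (Set.range (vertex hℓn M)) := by
  refine subset_antisymm (fun x hx => ?_)
    (convexHull_min (Set.range_subset_iff.2 hM.vertex_mem_kerSimplex) (convex_kerSimplex M))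
  have hker := hM.mem_ker_iff.1 hx.1
  rw [eq_sum_smul_vertex hker fun j => (hM.weight_pos j).ne']
  refine (convex_convexHull ℝ _).sum_mem (fun j _ => mul_nonneg (hx.2.1 _) (hM.weight_pos j).le)
    ((sum_free_mul_weight hker).trans hx.2.2)
    fun j _ => subset_convexHull ℝ _ (Set.mem_range_self j)

theorem vertex_mem_extremePoints (hM : IsBlockForm hℓn M) (j : Fin (n - ℓ)) :
    vertex hℓn M j ∈ (kerSimplex M).extremePoints ℝ := by
  refine exposedPoints_subset_extremePoints ⟨hM.vertex_mem_kerSimplex j,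
    LinearMap.toContinuousLinearMap (weight hℓn M j • LinearMap.proj (free ℓ j)), fun y hy => ?_⟩
  have hker := hM.mem_ker_iff.1 hy.1
  have hw0 : ∀ j', 0 ≤ y (free ℓ j') * weight hℓn M j' :=
    fun j' => mul_nonneg (hy.2.1 _) (hM.weight_pos j').le
  have hw1 : ∑ j', y (free ℓ j') * weight hℓn M j' = 1 := (sum_free_mul_weight hker).trans hy.2.2
  have hwle : y (free ℓ j) * weight hℓn M j ≤ 1 :=
    hw1 ▸ single_le_sum (fun j' _ => hw0 j') (mem_univ j)
  simp only [LinearMap.coe_toContinuousLinearMap', LinearMap.smul_apply, LinearMap.proj_apply,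
    smul_eq_mul, vertex_apply_free, if_pos, mul_inv_cancel₀ (hM.weight_pos j).ne']
  refine ⟨by linarith, fun h => ?_⟩
  have hwj : y (free ℓ j) * weight hℓn M j = 1 := by linarith
  rw [eq_sum_smul_vertex hker fun j' => (hM.weight_pos j').ne',
    Fintype.sum_eq_single j fun j' hj' => by
      rw [eq_zero_of_sum_eq_one_of_one_le hw0 hw1 hwj.ge hj', zero_smul],
    hwj, one_smul]

theorem extremePoints_kerSimplex (hM : IsBlockForm hℓn M) :
    (kerSimplex M).extremePoints ℝ = Set.range (vertex hℓn M) := by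
  refine subset_antisymm ?_ (Set.range_subset_iff.2 hM.vertex_mem_extremePoints)
  rw [hM.kerSimplex_eq_convexHull]
  exact extremePoints_convexHull_subset

end IsBlockForm

end BlockKernel

open BlockKernel

/-- For a real matrix `M = [D | C]` in block form (`D` diagonal with strictly
negative diagonal entries, `C` entrywise nonnegative), `P_M = ker M ∩ Δ^{n-1}` is the convex
hull of the explicit points `ν j`, and its extreme points are exactly the `ν j`. -/
theorem stmt_2 (ℓ n : ℕ) (hℓn : ℓ < n)
    (M : Matrix (Fin ℓ) (Fin n) ℝ)
    (hD : ∀ (i : Fin ℓ) (j : Fin n), (j : ℕ) < ℓ →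
      (((j : ℕ) = (i : ℕ) → M i j < 0) ∧ ((j : ℕ) ≠ (i : ℕ) → M i j = 0)))
    (hC : ∀ (i : Fin ℓ) (j : Fin n), ℓ ≤ (j : ℕ) → 0 ≤ M i j)
    (ν : Fin (n - ℓ) → (Fin n → ℝ))
    (hν : ∀ j : Fin (n - ℓ), ν j = fun p : Fin n =>
      (1 + ∑ k : Fin ℓ,
          -(M k ⟨ℓ + (j : ℕ), by have := j.isLt; omega⟩) /
            M k ⟨(k : ℕ), by have := k.isLt; omega⟩)⁻¹ *
        (if h : (p : ℕ) < ℓ then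
            -(M ⟨(p : ℕ), h⟩ ⟨ℓ + (j : ℕ), by have := j.isLt; omega⟩) / M ⟨(p : ℕ), h⟩ p
          else if (p : ℕ) = ℓ + (j : ℕ) then 1 else 0)) :
    ({x : Fin n → ℝ | ∀ i, ∑ p, M i p * x p = 0} ∩ stdSimplex ℝ (Fin n))
        = convexHull ℝ (Set.range ν) ∧
      Set.extremePoints ℝ
          ({x : Fin n → ℝ | ∀ i, ∑ p, M i p * x p = 0} ∩ stdSimplex ℝ (Fin n))
        = Set.range ν := by
  obtain rfl : ν = vertex hℓn M := funext hν
  have hM : IsBlockForm hℓn M :=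
    { pivot_off_diag := fun i k hki => (hD i (pivot hℓn k) k.isLt).2 fun h => hki (Fin.ext h)
      pivot_diag_neg := fun k => (hD k (pivot hℓn k) k.isLt).1 rfl
      free_nonneg := fun i j => hC i (free ℓ j) (Nat.le_add_right ℓ j) }
  exact ⟨hM.kerSimplex_eq_convexHull, hM.extremePoints_kerSimplex⟩
end

section
/- Under hypotheses (i), (ii), (iii), every face F of P_A — that is, every nonempty convex subset F ⊆ P_A that is extreme in P_A, meaning that whenever a point of F lies in the open segment between two points of P_A, both of those points belong to F — is of the form F = P_A ∩ V_I for some subset I ⊆ {1,…,n} with |I| = ℓ + dim(F) + 1, where dim(F) is the dimension of the affine span of F. -/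
/-!
Write `P_A = {x ≥ 0 | L x = (0, 1)}` with `L x = (A x, ∑ x_j)`, a surjective linear map onto
`ℝ^(ℓ+1)`. A convex face `F` contains a point `y` that is positive on the joint support `S` of
`F`; moving from `y` in any direction supported in `S` stays in `P_A` for a while, so extremality
forces `F = P_A ∩ V_S` and `vectorSpan F = ker L ∩ V_S`. Take `I ⊇ S` maximal with
`ker L ∩ V_I = ker L ∩ V_S`; adjoining a column whose image is not in `L(V_I)` would keep this
intersection, so `L(V_I)` is everything. Then `P_A ∩ V_I = F`, and rank–nullity on `V_I` gives
`|I| = (ℓ + 1) + dim F`.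
-/

open Module Set Filter Topology

namespace LinearMap

variable {K E V : Type*} [Field K] [AddCommGroup E] [Module K E] [AddCommGroup V] [Module K V]

theorem finrank_ker_inf_add_finrank_map (L : E →ₗ[K] V) (W : Submodule K E)
    [FiniteDimensional K W] :
    finrank K ↥(ker L ⊓ W) + finrank K ↥(W.map L) = finrank K W := by
  rw [← (L.domRestrict W).finrank_range_add_finrank_ker, range_domRestrict, ker_domRestrict,
    add_comm, ← (Submodule.comapSubtypeEquivOfLe (inf_le_right : ker L ⊓ W ≤ W)).finrank_eq,
    Submodule.comap_inf, Submodule.comap_subtype_self, inf_top_eq]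

theorem ker_inf_sup_span_singleton {L : E →ₗ[K] V} {W : Submodule K E} {v : E}
    (hv : L v ∉ W.map L) : ker L ⊓ (W ⊔ K ∙ v) = ker L ⊓ W := by
  refine le_antisymm (fun x ⟨hxL, hxWv⟩ ↦ ⟨hxL, ?_⟩) (inf_le_inf_left _ le_sup_left)
  obtain ⟨w, hw, _, hav, rfl⟩ := Submodule.mem_sup.1 hxWv
  obtain ⟨a, rfl⟩ := Submodule.mem_span_singleton.1 hav
  obtain rfl | ha := eq_or_ne a 0
  · simpa using hw
  · refine absurd ⟨-a⁻¹ • w, W.smul_mem _ hw, ?_⟩ hv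
    have : L w + a • L v = 0 := by simpa using hxL
    simp [eq_neg_of_add_eq_zero_left this, smul_smul, ha]

theorem preimage_inter_eq_of_ker_inf_eq {L : E →ₗ[K] V} {W W' : Submodule K E} (hW : W' ≤ W)
    (hker : ker L ⊓ W = ker L ⊓ W') {y : E} (hy : y ∈ W') :
    L ⁻¹' {L y} ∩ W = L ⁻¹' {L y} ∩ W' := by
  refine Subset.antisymm (fun x ⟨hxL, hxW⟩ ↦ ⟨hxL, ?_⟩) (inter_subset_inter_right _ hW)
  have hxy : x - y ∈ ker L ⊓ W' :=
    hker ▸ ⟨by simpa [sub_eq_zero] using hxL, W.sub_mem hxW (hW hy)⟩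
  simpa using W'.add_mem hxy.2 hy

theorem surjective_prod {L : E →ₗ[K] V} (hL : Function.Surjective L) (f : E →ₗ[K] K) {p : E}
    (hLp : L p = 0) (hfp : f p = 1) : Function.Surjective (L.prod f) := by
  rintro ⟨v, t⟩
  obtain ⟨u, rfl⟩ := hL v
  exact ⟨u + (t - f u) • p, by simp [hLp, hfp]⟩

end LinearMap

section CoordinateSubspace

variable {K V ι : Type*} [Field K] [AddCommGroup V] [Module K V]

theorem Pi.spanSubset_insert [Finite ι] [DecidableEq ι] (j : ι) (I : Set ι) :
    Pi.spanSubset K (insert j I) = Pi.spanSubset K I ⊔ K ∙ Pi.single j 1 := by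
  simp only [Pi.spanSubset, image_insert_eq, Submodule.span_insert, sup_comm, Pi.basisFun_apply]

theorem Pi.mem_spanSubset_iUnion_support [Finite ι] {F : Set (ι → K)} {x : ι → K}
    (hx : x ∈ F) :
    x ∈ Pi.spanSubset K (⋃ x ∈ F, Function.support x) :=
  Pi.mem_spanSubset_iff.2 fun _ hj ↦ Function.notMem_support.1 fun h ↦ hj (mem_biUnion hx h)

open LinearMap in
theorem exists_superset_ker_inf_spanSubset_eq [Finite ι] {L : (ι → K) →ₗ[K] V}
    (hL : Function.Surjective L) (J : Set ι) :
    ∃ I, J ⊆ I ∧ ker L ⊓ Pi.spanSubset K I = ker L ⊓ Pi.spanSubset K J ∧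
      (Pi.spanSubset K I).map L = ⊤ := by
  classical
  obtain ⟨I, ⟨hJI, hI⟩, hmax⟩ := (toFinite {I | J ⊆ I ∧
    ker L ⊓ Pi.spanSubset K I = ker L ⊓ Pi.spanSubset K J}).exists_maximal
    ⟨J, subset_rfl, rfl⟩
  refine ⟨I, hJI, hI, ?_⟩
  by_contra hne
  obtain ⟨j, hj⟩ : ∃ j, L (Pi.single j 1) ∉ (Pi.spanSubset K I).map L := by
    by_contra! h
    refine hne (top_le_iff.1 ?_)
    rw [← range_eq_top.2 hL, range_eq_map, ← (Pi.basisFun K ι).span_eq, Submodule.map_span_le]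
    rintro _ ⟨j, rfl⟩
    simpa using h j
  have hjI : j ∈ I := hmax ⟨hJI.trans (subset_insert j I),
    by rw [Pi.spanSubset_insert, ker_inf_sup_span_singleton hj, hI]⟩ (subset_insert j I)
    (mem_insert j I)
  exact hj (Submodule.mem_map_of_mem (Pi.mem_spanSubset_iff.2 fun k hk ↦
    Pi.single_eq_of_ne (ne_of_mem_of_not_mem hjI hk).symm 1))

end CoordinateSubspace

section Orthant

variable {ι : Type*} [Fintype ι]

theorem Convex.exists_forall_pos_of_mem_support {F : Set (ι → ℝ)} (hF : Convex ℝ F)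
    (hne : F.Nonempty) (hnn : F ⊆ Ici 0) :
    ∃ y ∈ F, ∀ j ∈ ⋃ x ∈ F, Function.support x, 0 < y j := by
  classical
  obtain ⟨x₀, hx₀⟩ := hne
  cases isEmpty_or_nonempty ι
  · exact ⟨x₀, hx₀, fun j ↦ isEmptyElim j⟩
  have hw : ∀ j, ∃ w ∈ F, j ∈ ⋃ x ∈ F, Function.support x → w j ≠ 0 := fun j ↦
    if h : j ∈ ⋃ x ∈ F, Function.support x then
      (mem_iUnion₂.1 h).imp fun _ hx ↦ ⟨hx.1, fun _ ↦ hx.2⟩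
    else ⟨x₀, hx₀, fun h' ↦ absurd h' h⟩
  choose w hwF hw0 using hw
  refine ⟨Finset.univ.centerMass (fun _ ↦ (1 : ℝ)) w,
    hF.centerMass_mem (fun _ _ ↦ zero_le_one) (by simp [Fintype.card_pos]) fun j _ ↦ hwF j,
    fun j hj ↦ ?_⟩
  simp only [Finset.centerMass, Pi.smul_apply, Finset.sum_apply, one_smul, smul_eq_mul]
  refine mul_pos (by simp [Fintype.card_pos])
    (Finset.sum_pos' (fun i _ ↦ hnn (hwF i) j) ⟨j, Finset.mem_univ j, ?_⟩)
  exact (hnn (hwF j) j).lt_of_ne' (hw0 j hj)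

theorem exists_pos_nonneg_add_smul_s5 {y d : ι → ℝ} (hy : 0 ≤ y)
    (hd : ∀ j, d j ≠ 0 → 0 < y j) :
    ∃ t : ℝ, 0 < t ∧ 0 ≤ y + t • d := by
  have : ∀ᶠ t in 𝓝 (0 : ℝ), 0 ≤ y + t • d := by
    simp only [Pi.le_def, eventually_all]
    intro j
    by_cases hdj : d j = 0
    · simpa [hdj] using hy j
    · have hc : Tendsto (fun t : ℝ ↦ y j + t * d j) (𝓝 0) (𝓝 (y j)) :=
        (by fun_prop : Continuous fun t : ℝ ↦ y j + t * d j).tendsto' 0 (y j) (by simp)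
      filter_upwards [hc.eventually_const_lt (hd j hdj)] with t ht
      simpa using ht.le
  obtain ⟨t, ht, htpos⟩ := ((this.filter_mono nhdsWithin_le_nhds).and
    (self_mem_nhdsWithin : ∀ᶠ t in 𝓝[>] (0 : ℝ), t ∈ Ioi 0)).exists
  exact ⟨t, htpos, ht⟩

variable {V : Type*} [AddCommGroup V] [Module ℝ V] {L : (ι → ℝ) →ₗ[ℝ] V} {c : V}
  {F : Set (ι → ℝ)}

theorem IsExtreme.eq_inter_spanSubset (hext : IsExtreme ℝ (L ⁻¹' {c} ∩ Ici 0) F)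
    (hconv : Convex ℝ F) (hne : F.Nonempty) :
    F = L ⁻¹' {c} ∩ Ici 0 ∩ Pi.spanSubset ℝ (⋃ x ∈ F, Function.support x) := by
  obtain ⟨y, hyF, hypos⟩ :=
    hconv.exists_forall_pos_of_mem_support hne fun x hx ↦ (hext.1 hx).2
  obtain ⟨hyc, hy0⟩ := hext.1 hyF
  refine Subset.antisymm (fun x hx ↦ ⟨hext.1 hx, Pi.mem_spanSubset_iUnion_support hx⟩) ?_
  rintro x ⟨hxP, hxS⟩
  have hyS := Pi.mem_spanSubset_iUnion_support hyF
  obtain ⟨t, ht, hz⟩ := exists_pos_nonneg_add_smul_s5 (d := y - x) hy0 fun j hj ↦ hypos j <| by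
    by_contra hjS
    simp [Pi.mem_spanSubset_iff.1 hxS j hjS, Pi.mem_spanSubset_iff.1 hyS j hjS] at hj
  have hzP : y + t • (y - x) ∈ L ⁻¹' {c} ∩ Ici 0 :=
    ⟨by simp [show L x = c from hxP.1, show L y = c from hyc], hz⟩
  refine hext.left_mem_of_mem_openSegment hxP hzP hyF
    ⟨t / (1 + t), 1 / (1 + t), by positivity, by positivity, by field_simp; ring, ?_⟩
  ext j
  simp only [Pi.add_apply, Pi.smul_apply, Pi.sub_apply, smul_eq_mul]
  field_simp
  ring

theorem IsExtreme.vectorSpan_eq (hext : IsExtreme ℝ (L ⁻¹' {c} ∩ Ici 0) F)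
    (hconv : Convex ℝ F) (hne : F.Nonempty) :
    vectorSpan ℝ F = LinearMap.ker L ⊓ Pi.spanSubset ℝ (⋃ x ∈ F, Function.support x) := by
  refine le_antisymm ?_ fun v ⟨hvL, hvS⟩ ↦ ?_
  · rw [vectorSpan_def, Submodule.span_le]
    rintro _ ⟨a, ha, b, hb, rfl⟩
    exact ⟨by simp [show L a = c from (hext.1 ha).1, show L b = c from (hext.1 hb).1],
      Submodule.sub_mem _ (Pi.mem_spanSubset_iUnion_support ha)
        (Pi.mem_spanSubset_iUnion_support hb)⟩
  obtain ⟨y, hyF, hypos⟩ :=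
    hconv.exists_forall_pos_of_mem_support hne fun x hx ↦ (hext.1 hx).2
  obtain ⟨t, ht, hz⟩ :=
    exists_pos_nonneg_add_smul_s5 (d := v) (hext.1 hyF).2 fun j hj ↦ hypos j <| by
    by_contra hjS
    exact hj (Pi.mem_spanSubset_iff.1 hvS j hjS)
  have hzF : y + t • v ∈ F := by
    rw [hext.eq_inter_spanSubset hconv hne]
    exact ⟨⟨by simpa [LinearMap.mem_ker.1 hvL] using (hext.1 hyF).1, hz⟩,
      Submodule.add_mem _ (Pi.mem_spanSubset_iUnion_support hyF) (Submodule.smul_mem _ t hvS)⟩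
  have hv : v = t⁻¹ • ((y + t • v) -ᵥ y) := by simp [smul_smul, ht.ne']
  exact hv ▸ Submodule.smul_mem _ _ (vsub_mem_vectorSpan ℝ hzF hyF)

theorem IsExtreme.exists_eq_inter_spanSubset [FiniteDimensional ℝ V] (hL : Function.Surjective L)
    (hext : IsExtreme ℝ (L ⁻¹' {c} ∩ Ici 0) F) (hconv : Convex ℝ F) (hne : F.Nonempty) :
    ∃ I : Set ι, F = L ⁻¹' {c} ∩ Ici 0 ∩ Pi.spanSubset ℝ I ∧
      I.ncard = finrank ℝ V + finrank ℝ (vectorSpan ℝ F) := by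
  obtain ⟨I, hSI, hker, htop⟩ :=
    exists_superset_ker_inf_spanSubset_eq hL (⋃ x ∈ F, Function.support x)
  obtain ⟨y, hy⟩ := hne
  have hslice : L ⁻¹' {L y} ∩ Pi.spanSubset ℝ I =
      L ⁻¹' {L y} ∩ Pi.spanSubset ℝ (⋃ x ∈ F, Function.support x) :=
    LinearMap.preimage_inter_eq_of_ker_inf_eq (Submodule.span_mono (image_mono hSI)) hker
      (Pi.mem_spanSubset_iUnion_support hy)
  refine ⟨I, ?_, ?_⟩
  · rw [hext.eq_inter_spanSubset hconv ⟨y, hy⟩, ← (hext.1 hy).1, inter_right_comm,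
      ← hslice, inter_right_comm]
  · rw [← Pi.dim_spanSubset (R := ℝ), ← L.finrank_ker_inf_add_finrank_map, hker, htop,
      finrank_top, hext.vectorSpan_eq hconv ⟨y, hy⟩, add_comm]

end Orthant

theorem stmt_5_general (ℓ n : ℕ)
    (A : Matrix (Fin ℓ) (Fin n) ℤ)
    (hii : (A.map (Int.cast : ℤ → ℝ)).rank = ℓ)
    (F : Set (Fin n → ℝ)) (hne : F.Nonempty) (hconv : Convex ℝ F)
    (hext : IsExtreme ℝ
      ({x : Fin n → ℝ | ∀ i, ∑ j, (A i j : ℝ) * x j = 0} ∩ stdSimplex ℝ (Fin n)) F) :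
    ∃ I : Finset (Fin n),
      F = ({x : Fin n → ℝ | ∀ i, ∑ j, (A i j : ℝ) * x j = 0} ∩ stdSimplex ℝ (Fin n))
          ∩ {x : Fin n → ℝ | ∀ j ∉ I, x j = 0} ∧
      I.card = ℓ + Module.finrank ℝ (vectorSpan ℝ F) + 1 := by
  classical
  set M := (A.map (Int.cast : ℤ → ℝ)).mulVecLin
  set L := M.prod (∑ j, LinearMap.proj j)
  have hP : {x : Fin n → ℝ | ∀ i, ∑ j, (A i j : ℝ) * x j = 0} ∩ stdSimplex ℝ (Fin n) =
      L ⁻¹' {(0, 1)} ∩ Ici 0 := by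
    ext x
    simp [L, M, stdSimplex, Matrix.mulVec, dotProduct, funext_iff, Pi.le_def, and_comm, and_assoc,
      and_left_comm]
  rw [hP] at hext ⊢
  have hM : Function.Surjective M :=
    LinearMap.range_eq_top.1 (Submodule.eq_top_of_finrank_eq (by simpa [Matrix.rank] using hii))
  obtain ⟨p, hp⟩ := hne
  have hL : Function.Surjective L := LinearMap.surjective_prod hM _
    (congrArg Prod.fst (hext.1 hp).1) (congrArg Prod.snd (hext.1 hp).1)
  obtain ⟨I, hFI, hcard⟩ := hext.exists_eq_inter_spanSubset hL hconv ⟨p, hp⟩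
  refine ⟨I.toFinset, ?_, ?_⟩
  · rw [hFI]
    congr 1
    ext x
    simp [Pi.mem_spanSubset_iff]
  · rw [← ncard_eq_toFinset_card', hcard, finrank_prod, finrank_fin_fun, finrank_self]
    ring

/-- Under hypotheses (i), (ii), (iii), every face `F` of `P_A` (a nonempty
convex extreme subset of `P_A`) is of the form `P_A ∩ V_I` for some index set `I` with
`|I| = ℓ + dim F + 1`, where `dim F` is the dimension of the affine span of `F`. -/
theorem stmt_5 (ℓ n : ℕ) (hℓ : 1 ≤ ℓ) (hn : ℓ ≤ n)
    (A : Matrix (Fin ℓ) (Fin n) ℤ)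
    (hi : ∃ x ∈ ({x : Fin n → ℝ | ∀ i, ∑ j, (A i j : ℝ) * x j = 0} ∩ stdSimplex ℝ (Fin n)),
        ∀ j, 0 < x j)
    (hii : (A.map (Int.cast : ℤ → ℝ)).rank = ℓ)
    (hiii : ∀ j, ∃ i, A i j ≠ 0)
    (F : Set (Fin n → ℝ)) (hne : F.Nonempty) (hconv : Convex ℝ F)
    (hext : IsExtreme ℝ
      ({x : Fin n → ℝ | ∀ i, ∑ j, (A i j : ℝ) * x j = 0} ∩ stdSimplex ℝ (Fin n)) F) :
    ∃ I : Finset (Fin n),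
      F = ({x : Fin n → ℝ | ∀ i, ∑ j, (A i j : ℝ) * x j = 0} ∩ stdSimplex ℝ (Fin n))
          ∩ {x : Fin n → ℝ | ∀ j ∉ I, x j = 0} ∧
      I.card = ℓ + Module.finrank ℝ (vectorSpan ℝ F) + 1 :=
  stmt_5_general ℓ n A hii F hne hconv hext
end

section
/- Let N ≥ 1 be an integer and let ω = exp(2πi/N) be a primitive N-th root of unity. Then for every t ∈ ℂ with t^N ≠ 1 and t² ≠ 1, (1/N) · Σ_{k=0}^{N−1} 1/((1 − ω^k t)² (1 − ω^{−k} t)²) = (1 + t² + 2N t^N − t^{2N} − 2N t^{N+2} − t^{2N+2}) / ((1 − t²)³ (1 − t^N)²). -/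
/-!
With `A = 1 / (1 - ωᵏ t)` and `B = 1 / (1 - ω⁻ᵏ t)` one has `A + B - 1 = (1 - t²) A B`, so the
summand `(A B)²` is a combination of `A²`, `B²`, `A`, `B` and `1` with coefficients depending on
`t` only. Expanding `A` as a geometric series in `ωᵏ t` and averaging over `k` gives
`∑ₖ A = N / (1 - t^N)`; differentiating this in `t` gives `∑ₖ A²`. Since `ω⁻¹` is again a primitive
`N`-th root of unity, the sums of `B` and `B²` take the same values.
-/

open Finset

theorem hasDerivAt_inv_one_sub_mul {𝕜 : Type*} [NontriviallyNormedField 𝕜] {a t : 𝕜}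
    (h : 1 - a * t ≠ 0) : HasDerivAt (fun s => (1 - a * s)⁻¹) (a / (1 - a * t) ^ 2) t := by
  simpa using (((hasDerivAt_id t).const_mul a).const_sub 1).fun_inv h

theorem inv_one_sub_sq_mul_one_sub_sq {K : Type*} [Field K] {a b : K} (ha : 1 - a ≠ 0)
    (hb : 1 - b ≠ 0) (hab : 1 - a * b ≠ 0) :
    ((1 - a) ^ 2 * (1 - b) ^ 2)⁻¹ =
      (((1 - a) ^ 2)⁻¹ + ((1 - b) ^ 2)⁻¹ + 2 * (a * b) / (1 - a * b) * ((1 - a)⁻¹ + (1 - b)⁻¹)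
        - (1 + a * b) / (1 - a * b)) / (1 - a * b) ^ 2 := by
  field_simp
  ring

namespace IsPrimitiveRoot

section Field

variable {K : Type*} [Field K] {N : ℕ} {ω : K}

theorem mul_pow_eq_pow (hω : IsPrimitiveRoot ω N) (k : ℕ) (t : K) : (ω ^ k * t) ^ N = t ^ N := by
  rw [mul_pow, pow_right_comm, hω.pow_eq_one, one_pow, one_mul]

theorem one_sub_pow_mul_ne_zero (hω : IsPrimitiveRoot ω N) {t : K} (ht : t ^ N ≠ 1) (k : ℕ) :
    1 - ω ^ k * t ≠ 0 := by
  intro h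
  apply ht
  rw [← hω.mul_pow_eq_pow k, ← sub_eq_zero.mp h, one_pow]

theorem sum_range_pow_pow_of_lt (hω : IsPrimitiveRoot ω N) {j : ℕ} (hj : j < N) :
    ∑ k ∈ range N, (ω ^ k) ^ j = if j = 0 then (N : K) else 0 := by
  split_ifs with hj0
  · simp [hj0]
  · simp_rw [← pow_mul, mul_comm _ j, pow_mul]
    rw [geom_sum_eq (hω.pow_ne_one_of_pos_of_lt hj0 hj), pow_right_comm, hω.pow_eq_one, one_pow,
      sub_self, zero_div]

theorem sum_inv_one_sub_pow_mul (hω : IsPrimitiveRoot ω N) {t : K} (ht : t ^ N ≠ 1) :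
    ∑ k ∈ range N, (1 - ω ^ k * t)⁻¹ = N / (1 - t ^ N) := by
  have hN : 0 < N := Nat.pos_of_ne_zero (by rintro rfl; exact ht (pow_zero t))
  have hgeom (k : ℕ) :
      (1 - ω ^ k * t)⁻¹ = (∑ j ∈ range N, (ω ^ k * t) ^ j) / (1 - t ^ N) := by
    rw [eq_div_iff (sub_ne_zero.mpr (Ne.symm ht)), ← hω.mul_pow_eq_pow k, ← mul_neg_geom_sum,
      inv_mul_cancel_left₀ (hω.one_sub_pow_mul_ne_zero ht k)]
  rw [sum_congr rfl fun k _ => hgeom k, ← sum_div, sum_comm]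
  congr 1
  calc ∑ j ∈ range N, ∑ k ∈ range N, (ω ^ k * t) ^ j
      = ∑ j ∈ range N, (if j = 0 then (N : K) else 0) * t ^ j := by
        refine sum_congr rfl fun j hj => ?_
        simp_rw [mul_pow, ← sum_mul, hω.sum_range_pow_pow_of_lt (mem_range.mp hj)]
    _ = N := by simp [hN]

end Field

theorem sum_inv_one_sub_pow_mul_sq {𝕜 : Type*} [NontriviallyNormedField 𝕜] {N : ℕ} {ω : 𝕜}
    (hω : IsPrimitiveRoot ω N) {t : 𝕜} (ht : t ^ N ≠ 1) :
    ∑ k ∈ range N, ((1 - ω ^ k * t) ^ 2)⁻¹ =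
      N / (1 - t ^ N) + N ^ 2 * t ^ N / (1 - t ^ N) ^ 2 := by
  have hN : N ≠ 0 := by rintro rfl; exact ht (pow_zero t)
  have hs : 1 - t ^ N ≠ 0 := sub_ne_zero.mpr (Ne.symm ht)
  have hderiv : ∑ k ∈ range N, ω ^ k / (1 - ω ^ k * t) ^ 2 =
      N * (N * t ^ (N - 1)) / (1 - t ^ N) ^ 2 := by
    have hsum : HasDerivAt (fun s => ∑ k ∈ range N, (1 - ω ^ k * s)⁻¹)
        (∑ k ∈ range N, ω ^ k / (1 - ω ^ k * t) ^ 2) t :=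
      HasDerivAt.fun_sum fun k _ => hasDerivAt_inv_one_sub_mul (hω.one_sub_pow_mul_ne_zero ht k)
    have hclosed : HasDerivAt (fun s => (N : 𝕜) / (1 - s ^ N))
        (N * (N * t ^ (N - 1)) / (1 - t ^ N) ^ 2) t := by
      simpa [div_eq_mul_inv, mul_assoc] using
        (((hasDerivAt_pow N t).const_sub 1).inv hs).const_mul (N : 𝕜)
    have heq : (fun s => ∑ k ∈ range N, (1 - ω ^ k * s)⁻¹) =ᶠ[nhds t]
        fun s => (N : 𝕜) / (1 - s ^ N) := by
      filter_upwards [(isOpen_ne_fun (continuous_pow N) continuous_const).mem_nhds ht] with s hs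
      exact hω.sum_inv_one_sub_pow_mul hs
    exact hsum.unique (hclosed.congr_of_eventuallyEq heq)
  calc ∑ k ∈ range N, ((1 - ω ^ k * t) ^ 2)⁻¹
      = ∑ k ∈ range N, ((1 - ω ^ k * t)⁻¹ + t * (ω ^ k / (1 - ω ^ k * t) ^ 2)) := by
        refine sum_congr rfl fun k _ => ?_
        have := hω.one_sub_pow_mul_ne_zero ht k
        field_simp
        ring
    _ = N / (1 - t ^ N) + t * (N * (N * t ^ (N - 1))) / (1 - t ^ N) ^ 2 := by
        rw [sum_add_distrib, ← mul_sum, hω.sum_inv_one_sub_pow_mul ht, hderiv, mul_div_assoc']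
    _ = N / (1 - t ^ N) + N ^ 2 * t ^ N / (1 - t ^ N) ^ 2 := by
        rw [← mul_pow_sub_one hN t]
        ring

end IsPrimitiveRoot

open Complex in
theorem stmt_11_general (N : ℕ) (ω : ℂ) (hω : ω = Complex.exp (2 * Real.pi * Complex.I / N))
    (t : ℂ) (ht : t ^ N ≠ 1) (ht2 : t ^ 2 ≠ 1) :
    (1 / (N : ℂ)) * ∑ k ∈ Finset.range N,
        1 / ((1 - ω ^ k * t) ^ 2 * (1 - ω ^ (-(k : ℤ)) * t) ^ 2)
      = (1 + t ^ 2 + 2 * N * t ^ N - t ^ (2 * N) - 2 * N * t ^ (N + 2) - t ^ (2 * N + 2))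
        / ((1 - t ^ 2) ^ 3 * (1 - t ^ N) ^ 2) := by
  have hN : N ≠ 0 := by rintro rfl; exact ht (pow_zero t)
  have hprim : IsPrimitiveRoot ω N := hω ▸ Complex.isPrimitiveRoot_exp N hN
  have hs : 1 - t ^ N ≠ 0 := sub_ne_zero.mpr (Ne.symm ht)
  have hu : 1 - t ^ 2 ≠ 0 := sub_ne_zero.mpr (Ne.symm ht2)
  have hterm (k : ℕ) : 1 / ((1 - ω ^ k * t) ^ 2 * (1 - ω ^ (-(k : ℤ)) * t) ^ 2) =
      (((1 - ω ^ k * t) ^ 2)⁻¹ + ((1 - ω⁻¹ ^ k * t) ^ 2)⁻¹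
        + 2 * t ^ 2 / (1 - t ^ 2) * ((1 - ω ^ k * t)⁻¹ + (1 - ω⁻¹ ^ k * t)⁻¹)
        - (1 + t ^ 2) / (1 - t ^ 2)) / (1 - t ^ 2) ^ 2 := by
    have hprod : ω ^ k * t * (ω⁻¹ ^ k * t) = t ^ 2 := by
      rw [inv_pow, mul_mul_mul_comm, mul_inv_cancel₀ (pow_ne_zero k (hprim.ne_zero hN)), one_mul,
        sq]
    rw [zpow_neg, zpow_natCast, ← inv_pow, one_div, inv_one_sub_sq_mul_one_sub_sq
      (hprim.one_sub_pow_mul_ne_zero ht k) (hprim.inv.one_sub_pow_mul_ne_zero ht k) (hprod ▸ hu),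
      hprod]
  simp_rw [hterm, ← sum_div, sum_sub_distrib, sum_add_distrib, ← mul_sum, sum_add_distrib,
    sum_const, card_range, nsmul_eq_mul, hprim.sum_inv_one_sub_pow_mul_sq ht,
    hprim.inv.sum_inv_one_sub_pow_mul_sq ht, hprim.sum_inv_one_sub_pow_mul ht,
    hprim.inv.sum_inv_one_sub_pow_mul ht]
  rw [pow_mul', pow_add, pow_add, pow_mul']
  field_simp
  ring

open Complex in
/-- Molien sum for the cyclic group `ℤ_N ⊂ SU₂`: for `ω = exp(2πi/N)` and
`t ∈ ℂ` with `t^N ≠ 1`, `t² ≠ 1`, the average of `1/((1-ω^k t)²(1-ω^{-k}t)²)` equals the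
stated rational function. -/
theorem stmt_11 (N : ℕ) (hN : 1 ≤ N) (ω : ℂ) (hω : ω = Complex.exp (2 * Real.pi * Complex.I / N))
    (t : ℂ) (ht : t ^ N ≠ 1) (ht2 : t ^ 2 ≠ 1) :
    (1 / (N : ℂ)) * ∑ k ∈ Finset.range N,
        1 / ((1 - ω ^ k * t) ^ 2 * (1 - ω ^ (-(k : ℤ)) * t) ^ 2)
      = (1 + t ^ 2 + 2 * N * t ^ N - t ^ (2 * N) - 2 * N * t ^ (N + 2) - t ^ (2 * N + 2))
        / ((1 - t ^ 2) ^ 3 * (1 - t ^ N) ^ 2) :=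
  stmt_11_general N ω hω t ht ht2
end

section
/- Let N ≥ 1 be an integer and let ω = exp(2πi/(2N)) be a primitive 2N-th root of unity. Then for every t ∈ ℂ with t^{2N} ≠ 1 and t² ≠ −1, (1/(4N)) · Σ_{k=0}^{2N−1} 1/((1 − ω^k t)² (1 − ω^{−k} t)²) + 1/(2(1 + t²)²) = Q(t)/P(t), where Q(t) = 1 + 3t⁴ + (2N−1)t^{2N} + (2N+3)t^{2N+2} − (2N+3)t^{2N+4} − (2N−1)t^{2N+6} − 3t^{4N+2} − t^{4N+6} and P(t) = (1 − t²)(1 − t⁴)²(1 − t^{2N})². -/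
/-!
Since `(ζ ^ k * t) * (ζ ^ (-k) * t) = t ^ 2`, partial fractions write each summand through
`1 / (1 - ζ ^ k * t)`, `1 / (1 - ζ ^ (-k) * t)` and their squares, with coefficients depending on
`t ^ 2` only. As `(ζ ^ k * t) ^ m = t ^ m`, these are polynomials of degree `< m` in `ζ ^ k * t`
over powers of `1 - t ^ m`, and summing over the `m`-th roots of unity keeps only their constant
terms.
-/

open Finset

theorem IsPrimitiveRoot.sum_range_pow_pow {R : Type*} [CommRing R] [IsDomain R] {ζ : R} {m : ℕ}
    (hζ : IsPrimitiveRoot ζ m) {j : ℕ} (hj : j < m) :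
    ∑ k ∈ range m, (ζ ^ k) ^ j = if j = 0 then (m : R) else 0 := by
  split_ifs with hj0
  · simp [hj0]
  · have hne : ζ ^ j ≠ 1 := fun h => hj0 (Nat.eq_zero_of_dvd_of_lt (hζ.dvd_of_pow_eq_one j h) hj)
    have hgeom := geom_sum_mul (ζ ^ j) m
    rw [pow_right_comm, hζ.pow_eq_one, one_pow, sub_self] at hgeom
    rw [sum_congr rfl fun k _ => pow_right_comm ζ k j]
    exact (mul_eq_zero.mp hgeom).resolve_right (sub_ne_zero.mpr hne)

theorem IsPrimitiveRoot.sum_range_sum_range_mul_pow {R : Type*} [CommRing R] [IsDomain R]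
    {ζ : R} {m : ℕ} (hζ : IsPrimitiveRoot ζ m) (c : ℕ → R) (t : R) :
    ∑ k ∈ range m, ∑ j ∈ range m, c j * (ζ ^ k * t) ^ j = m * c 0 := by
  rcases m.eq_zero_or_pos with rfl | hm
  · simp
  calc ∑ k ∈ range m, ∑ j ∈ range m, c j * (ζ ^ k * t) ^ j
      = ∑ j ∈ range m, c j * t ^ j * ∑ k ∈ range m, (ζ ^ k) ^ j := by
        rw [sum_comm]
        refine sum_congr rfl fun j _ => ?_
        rw [mul_sum]
        exact sum_congr rfl fun k _ => by ring
    _ = ∑ j ∈ range m, c j * t ^ j * if j = 0 then (m : R) else 0 :=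
        sum_congr rfl fun j hj => by rw [hζ.sum_range_pow_pow (mem_range.mp hj)]
    _ = m * c 0 := by simp [mem_range.mpr hm, mul_comm]

theorem one_div_one_sub_eq_geom_sum_div {K : Type*} [Field K] {x u : K} {m : ℕ}
    (hx : x ^ m = u) (hu : u ≠ 1) :
    1 / (1 - x) = (∑ j ∈ range m, x ^ j) / (1 - u) := by
  have hx1 : 1 - x ≠ 0 := fun h => hu (by rw [← hx, ← sub_eq_zero.mp h, one_pow])
  have hgeom := mul_neg_geom_sum x m
  rw [hx] at hgeom
  rw [div_eq_div_iff hx1 (sub_ne_zero.mpr hu.symm)]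
  linear_combination -hgeom

theorem one_sub_sq_mul_sum_range_succ_mul_pow {R : Type*} [CommRing R] (x : R) (m : ℕ) :
    (1 - x) ^ 2 * ∑ j ∈ range m, ((j : R) + 1) * x ^ j
      = 1 - (m + 1) * x ^ m + m * x ^ (m + 1) := by
  induction m with
  | zero => simp
  | succ m ih =>
    rw [sum_range_succ, mul_add, ih]
    push_cast
    ring

theorem one_div_one_sub_sq_eq {K : Type*} [Field K] {x u : K} {m : ℕ}
    (hx : x ^ m = u) (hu : u ≠ 1) :
    1 / (1 - x) ^ 2 = (∑ j ∈ range m, ((j : K) + 1) * x ^ j) / (1 - u)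
      + m * u / (1 - u) * (1 / (1 - x)) := by
  have hx1 : 1 - x ≠ 0 := fun h => hu (by rw [← hx, ← sub_eq_zero.mp h, one_pow])
  have hu1 : 1 - u ≠ 0 := sub_ne_zero.mpr hu.symm
  have key := one_sub_sq_mul_sum_range_succ_mul_pow x m
  rw [pow_succ x m, hx] at key
  field_simp
  linear_combination -key

theorem IsPrimitiveRoot.pow_mul_pow_eq {M : Type*} [CommMonoid M] {ζ : M} {m : ℕ}
    (hζ : IsPrimitiveRoot ζ m) (k : ℕ) (t : M) : (ζ ^ k * t) ^ m = t ^ m := by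
  rw [mul_pow, pow_right_comm, hζ.pow_eq_one, one_pow, one_mul]

/- With `A = 1 / (1 - a)` and `B = 1 / (1 - b)` one has
`1 / ((1 - a) * (1 - b)) = (A + B - 1) / (1 - a * b)`; square this and apply it once more to the
cross term `A * B`. -/
theorem one_div_sq_mul_sq_eq {K : Type*} [Field K] {a b : K} (ha : a ≠ 1) (hb : b ≠ 1)
    (hab : a * b ≠ 1) :
    1 / ((1 - a) ^ 2 * (1 - b) ^ 2)
      = -(1 + a * b) / (1 - a * b) ^ 3
        + 2 * (a * b) / (1 - a * b) ^ 3 * (1 / (1 - a) + 1 / (1 - b))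
        + 1 / (1 - a * b) ^ 2 * (1 / (1 - a) ^ 2 + 1 / (1 - b) ^ 2) := by
  have ha' : 1 - a ≠ 0 := sub_ne_zero.mpr (Ne.symm ha)
  have hb' : 1 - b ≠ 0 := sub_ne_zero.mpr (Ne.symm hb)
  have hab' : 1 - a * b ≠ 0 := sub_ne_zero.mpr (Ne.symm hab)
  field_simp
  ring

section PrimitiveRootSums

variable {K : Type*} [Field K] {ζ t : K} {m : ℕ}

theorem IsPrimitiveRoot.sum_one_div_one_sub (hζ : IsPrimitiveRoot ζ m) (ht : t ^ m ≠ 1) :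
    ∑ k ∈ range m, 1 / (1 - ζ ^ k * t) = m / (1 - t ^ m) := by
  rw [sum_congr rfl fun k _ => one_div_one_sub_eq_geom_sum_div (hζ.pow_mul_pow_eq k t) ht,
    ← sum_div]
  simpa using congrArg (· / (1 - t ^ m)) (hζ.sum_range_sum_range_mul_pow (fun _ => 1) t)

theorem IsPrimitiveRoot.sum_one_div_one_sub_sq (hζ : IsPrimitiveRoot ζ m) (ht : t ^ m ≠ 1) :
    ∑ k ∈ range m, 1 / (1 - ζ ^ k * t) ^ 2 = m * (1 + (m - 1) * t ^ m) / (1 - t ^ m) ^ 2 := by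
  have hu1 : 1 - t ^ m ≠ 0 := sub_ne_zero.mpr (Ne.symm ht)
  rw [sum_congr rfl fun k _ => one_div_one_sub_sq_eq (hζ.pow_mul_pow_eq k t) ht, sum_add_distrib,
    ← sum_div, ← mul_sum, hζ.sum_range_sum_range_mul_pow, hζ.sum_one_div_one_sub ht]
  field_simp
  ring

theorem IsPrimitiveRoot.sum_one_div_sq_mul_sq (hζ : IsPrimitiveRoot ζ m) (ht : t ^ m ≠ 1)
    (ht2 : t ^ 2 ≠ 1) :
    ∑ k ∈ range m, 1 / ((1 - ζ ^ k * t) ^ 2 * (1 - (ζ ^ k)⁻¹ * t) ^ 2)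
      = m * (-(1 + t ^ 2) / (1 - t ^ 2) ^ 3 + 4 * t ^ 2 / ((1 - t ^ 2) ^ 3 * (1 - t ^ m))
          + 2 * (1 + (m - 1) * t ^ m) / ((1 - t ^ 2) ^ 2 * (1 - t ^ m) ^ 2)) := by
  have hne : ∀ {x : K}, x ^ m = t ^ m → x ≠ 1 := fun hx h1 => ht (by rw [← hx, h1, one_pow])
  have hprod : ∀ k ∈ range m, ζ ^ k * t * ((ζ⁻¹) ^ k * t) = t ^ 2 := fun k hk => by
    rw [inv_pow, mul_mul_mul_comm, mul_inv_cancel₀ (pow_ne_zero k (hζ.ne_zero (by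
      rintro rfl; simp at hk))), one_mul, sq]
  simp only [← inv_pow]
  rw [sum_congr rfl fun k hk => by
      rw [one_div_sq_mul_sq_eq (hne (hζ.pow_mul_pow_eq k t)) (hne (hζ.inv.pow_mul_pow_eq k t))
        (hprod k hk ▸ ht2), hprod k hk]]
  rw [sum_add_distrib, sum_add_distrib, sum_const, card_range, ← mul_sum, ← mul_sum,
    sum_add_distrib, sum_add_distrib, hζ.sum_one_div_one_sub ht, hζ.inv.sum_one_div_one_sub ht,
    hζ.sum_one_div_one_sub_sq ht, hζ.inv.sum_one_div_one_sub_sq ht, nsmul_eq_mul]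
  have h2 : 1 - t ^ 2 ≠ 0 := sub_ne_zero.mpr (Ne.symm ht2)
  have hm : 1 - t ^ m ≠ 0 := sub_ne_zero.mpr (Ne.symm ht)
  field_simp
  ring

end PrimitiveRootSums

/-- Molien sum for the binary dihedral group `𝔻_N ⊂ SU₂` of order `4N`: for
`ω = exp(2πi/(2N))` and `t ∈ ℂ` with `t^{2N} ≠ 1`, `t² ≠ -1`, the stated combination of the
root-of-unity sum and `1/(2(1+t²)²)` equals `Q(t)/P(t)`. -/
theorem stmt_12 (N : ℕ) (hN : 1 ≤ N) (ω : ℂ)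
    (hω : ω = Complex.exp (2 * Real.pi * Complex.I / (2 * N)))
    (t : ℂ) (ht : t ^ (2 * N) ≠ 1) (ht2 : t ^ 2 ≠ -1) :
    (1 / (4 * N : ℂ)) * (∑ k ∈ Finset.range (2 * N),
          1 / ((1 - ω ^ k * t) ^ 2 * (1 - ω ^ (-(k : ℤ)) * t) ^ 2))
        + 1 / (2 * (1 + t ^ 2) ^ 2)
      = (1 + 3 * t ^ 4 + (2 * N - 1) * t ^ (2 * N) + (2 * N + 3) * t ^ (2 * N + 2)
            - (2 * N + 3) * t ^ (2 * N + 4) - (2 * N - 1) * t ^ (2 * N + 6)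
            - 3 * t ^ (4 * N + 2) - t ^ (4 * N + 6))
        / ((1 - t ^ 2) * (1 - t ^ 4) ^ 2 * (1 - t ^ (2 * N)) ^ 2) := by
  have hprim : IsPrimitiveRoot ω (2 * N) := by
    rw [hω, show (2 * N : ℂ) = ((2 * N : ℕ) : ℂ) by push_cast; ring]
    exact Complex.isPrimitiveRoot_exp _ (by omega)
  have ht2' : t ^ 2 ≠ 1 := fun h => ht (by rw [pow_mul, h, one_pow])
  simp only [zpow_neg, zpow_natCast]
  rw [hprim.sum_one_div_sq_mul_sq ht ht2']
  have hN' : (N : ℂ) ≠ 0 := Nat.cast_ne_zero.mpr (by omega)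
  have h1 : 1 - t ^ 2 ≠ 0 := sub_ne_zero.mpr (Ne.symm ht2')
  have h2 : 1 + t ^ 2 ≠ 0 := fun h => ht2 (by linear_combination h)
  have hu : 1 - t ^ (2 * N) ≠ 0 := sub_ne_zero.mpr (Ne.symm ht)
  have h4 : 1 - t ^ 4 = (1 - t ^ 2) * (1 + t ^ 2) := by ring
  rw [h4, show 4 * N + 2 = 2 * N + 2 * N + 2 by ring, show 4 * N + 6 = 2 * N + 2 * N + 6 by ring]
  simp only [pow_add]
  push_cast
  field_simp
  ring
end

section
/- Let r ≥ 8 and let d be an integer with 1 < d < r − 1 and gcd(d, r) = 1. Then the number of exponent vectors (a₁, a₂, a₃, a₄) ∈ ℕ⁴ with a₁ + a₂ + a₃ + a₄ = 3 and r ∣ ((d+1)a₁ + (1−d)a₂ − (d+1)a₃ + (d−1)a₄) is at most 4. In particular, at most two of the six congruences 3d+3 ≡ 0, 3d−3 ≡ 0, d+3 ≡ 0, d−3 ≡ 0, 3d+1 ≡ 0, 3d−1 ≡ 0 (mod r) can hold. -/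
private def gvec : Fin 6 → ℕ × ℕ × ℕ × ℕ :=
  ![(3,0,0,0),(0,0,0,3),(2,1,0,0),(0,0,1,2),(2,0,0,1),(1,0,0,2)]

private def hvec : Fin 6 → ℕ × ℕ × ℕ × ℕ :=
  ![(0,0,3,0),(0,3,0,0),(0,0,2,1),(1,2,0,0),(0,1,2,0),(0,2,1,0)]

/-- For `r ≥ 8` and `1 < d < r-1` with `gcd(d,r) = 1`, the number of exponent
vectors `(a₁,a₂,a₃,a₄) ∈ ℕ⁴` with `a₁+a₂+a₃+a₄ = 3` and
`r ∣ (d+1)a₁ + (1-d)a₂ - (d+1)a₃ + (d-1)a₄` is at most `4`; in particular at most two of the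
six congruences `3d±3 ≡ 0`, `d±3 ≡ 0`, `3d±1 ≡ 0 (mod r)` hold. -/
theorem stmt_16 (r : ℕ) (hr : 8 ≤ r) (d : ℤ) (hd1 : 1 < d) (hd2 : d < (r : ℤ) - 1)
    (hd : IsCoprime d (r : ℤ)) :
    {a : ℕ × ℕ × ℕ × ℕ | a.1 + a.2.1 + a.2.2.1 + a.2.2.2 = 3 ∧
        ((r : ℤ)) ∣ ((d + 1) * a.1 + (1 - d) * a.2.1
          - (d + 1) * a.2.2.1 + (d - 1) * a.2.2.2)}.ncard ≤ 4 ∧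
      {i : Fin 6 | (r : ℤ) ∣
          ![3 * d + 3, 3 * d - 3, d + 3, d - 3, 3 * d + 1, 3 * d - 1] i}.ncard ≤ 2 := by
  have hr' : (8 : ℤ) ≤ (r : ℤ) := by exact_mod_cast hr
  have part2 : ({i : Fin 6 | (r : ℤ) ∣ ![3 * d + 3, 3 * d - 3, d + 3, d - 3, 3 * d + 1, 3 * d - 1] i}).ncard ≤ 2 := by
    have h1 : ({i : Fin 6 | (r : ℤ) ∣ ![3 * d + 3, 3 * d - 3, d + 3, d - 3, 3 * d + 1, 3 * d - 1] i} ∩ ({0, 1, 4, 5} : Set (Fin 6))).ncard ≤ 1 := by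
      rw [Set.ncard_le_one]
      rintro a ⟨ha, ha'⟩ b ⟨hb, hb'⟩
      fin_cases a <;> fin_cases b <;>
        first
        | rfl
        | exact absurd ha' (by decide)
        | exact absurd hb' (by decide)
        | (simp only [Set.mem_setOf_eq] at ha hb
           norm_num at ha hb
           exact absurd (Int.eq_zero_of_abs_lt_dvd (dvd_sub ha hb)
             (by rw [abs_lt]; constructor <;> linarith)) (by intro hcon; linarith))
    have h2 : ({i : Fin 6 | (r : ℤ) ∣ ![3 * d + 3, 3 * d - 3, d + 3, d - 3, 3 * d + 1, 3 * d - 1] i} ∩ ({2, 3} : Set (Fin 6))).ncard ≤ 1 := by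
      rw [Set.ncard_le_one]
      rintro a ⟨ha, ha'⟩ b ⟨hb, hb'⟩
      fin_cases a <;> fin_cases b <;>
        first
        | rfl
        | exact absurd ha' (by decide)
        | exact absurd hb' (by decide)
        | (simp only [Set.mem_setOf_eq] at ha hb
           norm_num at ha hb
           exact absurd (Int.eq_zero_of_abs_lt_dvd (dvd_sub ha hb)
             (by rw [abs_lt]; constructor <;> linarith)) (by intro hcon; linarith))
    have hsplit : {i : Fin 6 | (r : ℤ) ∣ ![3 * d + 3, 3 * d - 3, d + 3, d - 3, 3 * d + 1, 3 * d - 1] i} ⊆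
        ({i : Fin 6 | (r : ℤ) ∣ ![3 * d + 3, 3 * d - 3, d + 3, d - 3, 3 * d + 1, 3 * d - 1] i} ∩ ({0, 1, 4, 5} : Set (Fin 6))) ∪ ({i : Fin 6 | (r : ℤ) ∣ ![3 * d + 3, 3 * d - 3, d + 3, d - 3, 3 * d + 1, 3 * d - 1] i} ∩ ({2, 3} : Set (Fin 6))) := by
      intro i hi
      fin_cases i
      · exact Or.inl ⟨hi, by decide⟩
      · exact Or.inl ⟨hi, by decide⟩
      · exact Or.inr ⟨hi, by decide⟩
      · exact Or.inr ⟨hi, by decide⟩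
      · exact Or.inl ⟨hi, by decide⟩
      · exact Or.inl ⟨hi, by decide⟩
    have hu := Set.ncard_union_le ({i : Fin 6 | (r : ℤ) ∣ ![3 * d + 3, 3 * d - 3, d + 3, d - 3, 3 * d + 1, 3 * d - 1] i} ∩ ({0, 1, 4, 5} : Set (Fin 6)))
      ({i : Fin 6 | (r : ℤ) ∣ ![3 * d + 3, 3 * d - 3, d + 3, d - 3, 3 * d + 1, 3 * d - 1] i} ∩ ({2, 3} : Set (Fin 6)))
    have hle := Set.ncard_le_ncard hsplit (Set.toFinite _)
    omega
  refine ⟨?_, part2⟩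
  have hsub : {a : ℕ × ℕ × ℕ × ℕ | a.1 + a.2.1 + a.2.2.1 + a.2.2.2 = 3 ∧
        ((r : ℤ)) ∣ ((d + 1) * a.1 + (1 - d) * a.2.1
          - (d + 1) * a.2.2.1 + (d - 1) * a.2.2.2)} ⊆ gvec '' {i : Fin 6 | (r : ℤ) ∣ ![3 * d + 3, 3 * d - 3, d + 3, d - 3, 3 * d + 1, 3 * d - 1] i} ∪ hvec '' {i : Fin 6 | (r : ℤ) ∣ ![3 * d + 3, 3 * d - 3, d + 3, d - 3, 3 * d + 1, 3 * d - 1] i} := by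
    rintro ⟨a1, a2, a3, a4⟩ ⟨hsum, hdvd⟩
    dsimp only at hsum hdvd
    have b1 : a1 ≤ 3 := by omega
    have b2 : a2 ≤ 3 := by omega
    have b3 : a3 ≤ 3 := by omega
    have b4 : a4 ≤ 3 := by omega
    interval_cases a1 <;> interval_cases a2 <;> interval_cases a3 <;> interval_cases a4 <;>
      first
          | (exfalso; omega)
          | (refine Or.inl ⟨0, ?_, rfl⟩; show (r:ℤ) ∣ 3*d+3; obtain ⟨k, hk⟩ := hdvd; push_cast at hk; exact ⟨k, by linear_combination hk⟩)
          | (refine Or.inl ⟨1, ?_, rfl⟩; show (r:ℤ) ∣ 3*d-3; obtain ⟨k, hk⟩ := hdvd; push_cast at hk; exact ⟨k, by linear_combination hk⟩)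
          | (refine Or.inl ⟨2, ?_, rfl⟩; show (r:ℤ) ∣ d+3; obtain ⟨k, hk⟩ := hdvd; push_cast at hk; exact ⟨k, by linear_combination hk⟩)
          | (refine Or.inl ⟨3, ?_, rfl⟩; show (r:ℤ) ∣ d-3; obtain ⟨k, hk⟩ := hdvd; push_cast at hk; exact ⟨k, by linear_combination hk⟩)
          | (refine Or.inl ⟨4, ?_, rfl⟩; show (r:ℤ) ∣ 3*d+1; obtain ⟨k, hk⟩ := hdvd; push_cast at hk; exact ⟨k, by linear_combination hk⟩)
          | (refine Or.inl ⟨5, ?_, rfl⟩; show (r:ℤ) ∣ 3*d-1; obtain ⟨k, hk⟩ := hdvd; push_cast at hk; exact ⟨k, by linear_combination hk⟩)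
          | (refine Or.inr ⟨0, ?_, rfl⟩; show (r:ℤ) ∣ 3*d+3; obtain ⟨k, hk⟩ := hdvd; push_cast at hk; exact ⟨-k, by linear_combination -hk⟩)
          | (refine Or.inr ⟨1, ?_, rfl⟩; show (r:ℤ) ∣ 3*d-3; obtain ⟨k, hk⟩ := hdvd; push_cast at hk; exact ⟨-k, by linear_combination -hk⟩)
          | (refine Or.inr ⟨2, ?_, rfl⟩; show (r:ℤ) ∣ d+3; obtain ⟨k, hk⟩ := hdvd; push_cast at hk; exact ⟨-k, by linear_combination -hk⟩)
          | (refine Or.inr ⟨3, ?_, rfl⟩; show (r:ℤ) ∣ d-3; obtain ⟨k, hk⟩ := hdvd; push_cast at hk; exact ⟨-k, by linear_combination -hk⟩)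
          | (refine Or.inr ⟨4, ?_, rfl⟩; show (r:ℤ) ∣ 3*d+1; obtain ⟨k, hk⟩ := hdvd; push_cast at hk; exact ⟨-k, by linear_combination -hk⟩)
          | (refine Or.inr ⟨5, ?_, rfl⟩; show (r:ℤ) ∣ 3*d-1; obtain ⟨k, hk⟩ := hdvd; push_cast at hk; exact ⟨-k, by linear_combination -hk⟩)
          | (exfalso
             push_cast at hdvd
             have h0 := Int.eq_zero_of_abs_lt_dvd hdvd (by rw [abs_lt]; constructor <;> linarith)
             linarith)
  have hfin : (gvec '' {i : Fin 6 | (r : ℤ) ∣ ![3 * d + 3, 3 * d - 3, d + 3, d - 3, 3 * d + 1, 3 * d - 1] i} ∪ hvec '' {i : Fin 6 | (r : ℤ) ∣ ![3 * d + 3, 3 * d - 3, d + 3, d - 3, 3 * d + 1, 3 * d - 1] i}).Finite :=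
    ((Set.toFinite _).image gvec).union ((Set.toFinite _).image hvec)
  have i1 := Set.ncard_image_le (f := gvec) (s := {i : Fin 6 | (r : ℤ) ∣ ![3 * d + 3, 3 * d - 3, d + 3, d - 3, 3 * d + 1, 3 * d - 1] i}) (Set.toFinite _)
  have i2 := Set.ncard_image_le (f := hvec) (s := {i : Fin 6 | (r : ℤ) ∣ ![3 * d + 3, 3 * d - 3, d + 3, d - 3, 3 * d + 1, 3 * d - 1] i}) (Set.toFinite _)
  have hu := Set.ncard_union_le (gvec '' {i : Fin 6 | (r : ℤ) ∣ ![3 * d + 3, 3 * d - 3, d + 3, d - 3, 3 * d + 1, 3 * d - 1] i}) (hvec '' {i : Fin 6 | (r : ℤ) ∣ ![3 * d + 3, 3 * d - 3, d + 3, d - 3, 3 * d + 1, 3 * d - 1] i})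
  have hle := Set.ncard_le_ncard hsub hfin
  omega
end
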